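/- arXiv:2605.21023 — 7 statements merged into one kernel-verified Lean document; each statement's English description precedes it below -/
import Mathlib

section
/- For d, r ≥ 1 and 1 ≤ i ≤ d, the sum over j from 1 to d of C(r-1, d+1, ir-j)·A(d,j) equals r^d·A(d,i), where A(d,j) is the Eulerian number counting permutations of {1,...,d} with j-1 descents and C(r-1, d+1, ir-j) is the number of weak compositions of ir-j into d+1 parts each at most r-1. -/
open scoped Classical BigOperators

noncomputable section

/-- Descent set of a permutation of `Fin d`. -/
def descents (d : ℕ) (π : Equiv.Perm (Fin d)) : Finset (Fin d) :=
  Finset.univ.filter (fun t => ∃ h : (t : ℕ) + 1 < d, π ⟨(t : ℕ) + 1, h⟩ < π t)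

/-- Eulerian number `A(d,j)`: permutations of `{1,…,d}` with `j-1` descents. -/
def A (d j : ℕ) : ℕ :=
  (Finset.univ.filter (fun π : Equiv.Perm (Fin d) => (descents d π).card = j - 1)).card

/-- `C s n m`: number of weak compositions of `m` into `n` parts, each part at most `s`. -/
def C (s n : ℕ) (m : ℤ) : ℕ :=
  Fintype.card {v : Fin n → Fin (s + 1) // ∑ t, ((v t : ℕ) : ℤ) = m}

/-- The hypersimplex `Δ_{d,j} ⊆ ℝ^{d+1}`. -/
def Δ (d j : ℕ) : Set (Fin (d + 1) → ℝ) :=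
  {x | ∑ t, x t = j ∧ ∀ t, 0 ≤ x t ∧ x t ≤ 1}

/-- The lattice translate `v + Δ_{d,j}`. -/
def latTranslate (d : ℕ) (v : Fin (d + 1) → ℤ) (j : ℕ) : Set (Fin (d + 1) → ℝ) :=
  {x | (fun t => x t - (v t : ℝ)) ∈ Δ d j}

/-- The 0/1 indicator vector of a subset `T ⊆ [d+1]`. -/
def ind (d : ℕ) (T : Finset (Fin (d + 1))) : Fin (d + 1) → ℝ :=
  fun t => if t ∈ T then 1 else 0

/-- `F` is a face of `P`: empty, or the set of maximizers of a linear functional over `P`. -/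
def IsFace {n : ℕ} (P F : Set (Fin n → ℝ)) : Prop :=
  F = ∅ ∨ ∃ f : (Fin n → ℝ) →ₗ[ℝ] ℝ, F = {x | x ∈ P ∧ ∀ y ∈ P, f y ≤ f x}

/-- The `r`-dilate `rΔ_{d,i}`. -/
def rdil (d r i : ℕ) : Set (Fin (d + 1) → ℝ) :=
  {x | ∑ t, x t = (i : ℝ) * r ∧ ∀ t, 0 ≤ x t ∧ x t ≤ r}

/-- The set `𝒞(s, n, m)` of lattice weak compositions of `m` into `n` parts each `≤ s`. -/
def Comp (s n : ℕ) (m : ℤ) : Set (Fin n → ℤ) :=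
  {v | (∀ t, 0 ≤ v t ∧ v t ≤ s) ∧ ∑ t, v t = m}

/-!
Let `h(n, M)` be the number of weak compositions of `M` into `n` parts (`0` for `M < 0`).
Inclusion–exclusion on the parts exceeding `s` gives
`C(s, n, M) = ∑ₖ (-1)ᵏ (n choose k) h(n, M - k(s+1))`, and Worpitzky's identity
`∑ⱼ A(d,j) h(d+1, N-j) = max(N,0)^d` follows by sorting the maps `Fin d → Fin N`: the maps
sorted by `σ` are the weakly increasing sequences that increase strictly at the descents of `σ`,
and there are `(N + d - 1 - des σ choose d)` of them. Hence
`∑ⱼ C(s, d+1, M-j) A(d,j) = ∑ₖ (-1)ᵏ (d+1 choose k) max(M - k(s+1), 0)^d`.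
For `s = r-1`, `M = ir` the right side is `r^d` times its value for `s = 0`, `M = i`,
and there the left side collapses to `A(d,i)` since `C(0, d+1, m) = [m = 0]`.
-/

open Finset

def multichooseZ (n : ℕ) (M : ℤ) : ℤ :=
  if 0 ≤ M then (n.multichoose M.toNat : ℤ) else 0

lemma multichooseZ_of_neg {n : ℕ} {M : ℤ} (h : M < 0) : multichooseZ n M = 0 :=
  if_neg h.not_ge

lemma multichooseZ_natCast (n k : ℕ) : multichooseZ n k = n.multichoose k := by
  simp [multichooseZ]

lemma multichooseZ_zero_left (M : ℤ) : multichooseZ 0 M = if M = 0 then 1 else 0 := by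
  rcases lt_or_ge M 0 with h | h
  · rw [multichooseZ_of_neg h, if_neg h.ne]
  · lift M to ℕ using h
    cases M with
    | zero => simp [multichooseZ]
    | succ k =>
      rw [multichooseZ_natCast, Nat.multichoose_zero_succ, Nat.cast_zero, if_neg (by omega)]

lemma multichooseZ_succ_left (n : ℕ) (M : ℤ) :
    multichooseZ (n + 1) M = multichooseZ n M + multichooseZ (n + 1) (M - 1) := by
  rcases lt_or_ge M 0 with h | h
  · simp [multichooseZ_of_neg h, multichooseZ_of_neg (show M - 1 < 0 by omega)]
  · lift M to ℕ using h
    cases M with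
    | zero => simp [multichooseZ]
    | succ k =>
      rw [Nat.cast_succ, add_sub_cancel_right, ← Nat.cast_succ]
      simp only [multichooseZ_natCast, Nat.multichoose_succ_succ, Nat.cast_add]

lemma multichooseZ_sub_sub (n q : ℕ) (M : ℤ) :
    multichooseZ (n + 1) M - multichooseZ (n + 1) (M - q) =
      ∑ a ∈ range q, multichooseZ n (M - a) := by
  have := sum_range_sub' (fun a : ℕ => multichooseZ (n + 1) (M - a)) q
  simp only [Nat.cast_zero, sub_zero] at this
  rw [← this]
  refine sum_congr rfl fun a _ => ?_
  rw [multichooseZ_succ_left n (M - a), Nat.cast_succ, sub_add_eq_sub_sub]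
  ring

lemma C_parts_zero (s : ℕ) (M : ℤ) : C s 0 M = if M = 0 then 1 else 0 := by
  split_ifs with h <;> simp [C, h, eq_comm]

lemma C_bound_zero (n : ℕ) (M : ℤ) : C 0 n M = if M = 0 then 1 else 0 := by
  split_ifs with h <;> simp [C, h, eq_comm]

lemma C_parts_succ (s n : ℕ) (M : ℤ) :
    C s (n + 1) M = ∑ a ∈ range (s + 1), C s n (M - a) := by
  rw [C, Fintype.card_congr ((Equiv.subtypeEquiv (Fin.consEquiv fun _ => Fin (s + 1)).symm
      fun v => ?_).trans (Equiv.subtypeProdEquivSigmaSubtype fun (a : Fin (s + 1))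
        (w : Fin n → Fin (s + 1)) => (a : ℤ) + ∑ t, ((w t : ℕ) : ℤ) = M)),
    Fintype.card_sigma, ← Fin.sum_univ_eq_sum_range]
  · simp only [C, eq_sub_iff_add_eq']
  · simp [Fin.sum_univ_succ, Fin.consEquiv, Fin.tail]

lemma sum_range_succ_alternating_choose_mul (n : ℕ) (F : ℕ → ℤ) :
    ∑ k ∈ range (n + 2), (-1) ^ k * ((n + 1).choose k : ℤ) * F k =
      ∑ k ∈ range (n + 1), (-1) ^ k * (n.choose k : ℤ) * (F k - F (k + 1)) := by
  have := sum_choose_succ_mul (R := ℤ) (fun k _ => (-1) ^ k * F k) n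
  simp only [← mul_assoc, mul_comm _ ((-1 : ℤ) ^ _)] at this
  rw [this, ← sum_add_distrib]
  refine sum_congr rfl fun k _ => ?_
  ring

theorem C_eq_sum_multichooseZ (s n : ℕ) (M : ℤ) :
    (C s n M : ℤ) = ∑ k ∈ range (n + 1),
      (-1) ^ k * (n.choose k : ℤ) * multichooseZ n (M - k * (s + 1)) := by
  induction n generalizing M with
  | zero => simp [C_parts_zero, multichooseZ_zero_left]
  | succ n ih =>
    rw [sum_range_succ_alternating_choose_mul, C_parts_succ, Nat.cast_sum]
    simp_rw [ih]
    calc _ = ∑ k ∈ range (n + 1), ∑ a ∈ range (s + 1),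
          (-1) ^ k * (n.choose k : ℤ) * multichooseZ n (M - k * (s + 1) - a) := by
          rw [sum_comm]
          refine sum_congr rfl fun a _ => sum_congr rfl fun k _ => ?_
          rw [sub_right_comm]
      _ = _ := by
          refine sum_congr rfl fun k _ => ?_
          rw [← mul_sum, ← multichooseZ_sub_sub]
          congr 3
          push_cast
          ring

section Slack

variable {e : ℕ} {s : Fin e → ℕ}

lemma Fin.partialSum_last (s : Fin e → ℕ) : Fin.partialSum s (Fin.last e) = ∑ i, s i := by
  rw [Fin.partialSum, Fin.val_last, List.take_of_length_le (by simp), List.sum_ofFn]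

lemma Fin.monotone_partialSum (s : Fin e → ℕ) : Monotone (Fin.partialSum s) :=
  Fin.monotone_iff_le_succ.2 fun i => by rw [Fin.partialSum_succ]; omega

lemma partialSum_le_of_strictMono (hs : ∀ i, s i ≤ 1) {m : ℕ} {g : Fin (e + 1) → Fin m}
    (hg : StrictMono g) (t : Fin (e + 1)) : Fin.partialSum s t ≤ g t := by
  induction t using Fin.induction with
  | zero => simp
  | succ i ih =>
    have hi : (g i.castSucc : ℕ) < g i.succ := hg (Fin.castSucc_lt_succ (i := i))
    rw [Fin.partialSum_succ]
    linarith [hs i]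

lemma monotone_sub_partialSum (hs : ∀ i, s i ≤ 1) {m : ℕ} {g : Fin (e + 1) → Fin m}
    (hg : StrictMono g) : Monotone fun t => (g t : ℕ) - Fin.partialSum s t :=
  Fin.monotone_iff_le_succ.2 fun i => by
    have hi : (g i.castSucc : ℕ) < g i.succ := hg (Fin.castSucc_lt_succ (i := i))
    simp only [Fin.partialSum_succ]
    have := hs i
    omega

/-- Adding the partial sums of `s` makes every step strict. -/
def increasingWithSlackEquiv (hs : ∀ i, s i ≤ 1) (N : ℕ) :
    {a : Fin (e + 1) → Fin N // ∀ i, (a i.castSucc : ℕ) + 1 ≤ a i.succ + s i} ≃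
      (Fin (e + 1) ↪o Fin (N + ∑ i, s i)) where
  toFun a := OrderEmbedding.ofStrictMono
    (fun t => ⟨a.1 t + Fin.partialSum s t, by
      have := Fin.monotone_partialSum s (Fin.le_last t)
      rw [Fin.partialSum_last] at this
      omega⟩)
    (Fin.strictMono_iff_lt_succ.2 fun i => by
      rw [Fin.mk_lt_mk, Fin.partialSum_succ]
      linarith [a.2 i])
  invFun g := ⟨fun t => ⟨g t - Fin.partialSum s t, by
      have := monotone_sub_partialSum hs g.strictMono (Fin.le_last t)
      have := partialSum_le_of_strictMono hs g.strictMono (Fin.last e)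
      have := (g (Fin.last e)).isLt
      simp only [Fin.partialSum_last] at *
      omega⟩, fun i => by
      have hi : (g i.castSucc : ℕ) < g i.succ := g.strictMono (Fin.castSucc_lt_succ (i := i))
      have := partialSum_le_of_strictMono hs g.strictMono i.castSucc
      simp only [Fin.partialSum_succ]
      omega⟩
  left_inv a := by ext; simp
  right_inv g := by
    ext t
    simp [Nat.sub_add_cancel (partialSum_le_of_strictMono hs g.strictMono t)]

lemma card_increasingWithSlack (hs : ∀ i, s i ≤ 1) (N : ℕ) :
    Nat.card {a : Fin (e + 1) → Fin N // ∀ i, (a i.castSucc : ℕ) + 1 ≤ a i.succ + s i} =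
      (N + ∑ i, s i).choose (e + 1) := by
  rw [Nat.card_congr ((increasingWithSlackEquiv hs N).trans Set.powersetCard.ofFinEmbEquiv),
    Set.powersetCard.card, Nat.card_eq_fintype_card, Fintype.card_fin]

end Slack

section Worpitzky

variable {e : ℕ}

def ascents (σ : Equiv.Perm (Fin (e + 1))) : Finset (Fin e) :=
  univ.filter fun i => σ i.castSucc < σ i.succ

lemma descents_eq_map (σ : Equiv.Perm (Fin (e + 1))) :
    descents (e + 1) σ = (univ.filter fun i : Fin e => σ i.succ < σ i.castSucc).map
      Fin.castSuccEmb := by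
  ext t
  simp only [descents, mem_filter, mem_univ, true_and, mem_map, Fin.coe_castSuccEmb]
  constructor
  · rintro ⟨h, hlt⟩
    exact ⟨⟨t, by omega⟩, by simpa [Fin.succ, Fin.castSucc] using hlt, rfl⟩
  · rintro ⟨i, hlt, rfl⟩
    exact ⟨by simp, by simpa [Fin.succ] using hlt⟩

lemma card_descents_add_card_ascents (σ : Equiv.Perm (Fin (e + 1))) :
    (descents (e + 1) σ).card + (ascents σ).card = e := by
  have hne (i : Fin e) : σ i.castSucc ≠ σ i.succ := σ.injective.ne (Fin.castSucc_lt_succ).ne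
  rw [descents_eq_map, card_map, ascents,
    filter_congr fun i _ => (hne i).le_iff_lt.symm.trans not_lt.symm,
    card_filter_add_card_filter_not, card_univ, Fintype.card_fin]

lemma sort_eq_iff_ascents {N : ℕ} (f : Fin (e + 1) → Fin N) (σ : Equiv.Perm (Fin (e + 1))) :
    Tuple.sort f = σ ↔ ∀ i : Fin e,
      (f (σ i.castSucc) : ℕ) + 1 ≤ f (σ i.succ) + if i ∈ ascents σ then 1 else 0 := by
  rw [eq_comm, Tuple.eq_sort_iff', Fin.strictMono_iff_lt_succ]
  refine forall_congr' fun i => ?_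
  change toLex (f (σ i.castSucc), σ i.castSucc) < toLex (f (σ i.succ), σ i.succ) ↔ _
  rw [Prod.Lex.toLex_lt_toLex, Fin.lt_def, Fin.ext_iff, ascents]
  split_ifs with h <;> simp_all; omega

lemma card_sort_eq (N : ℕ) (σ : Equiv.Perm (Fin (e + 1))) :
    Nat.card {f : Fin (e + 1) → Fin N // Tuple.sort f = σ} =
      (N + (ascents σ).card).choose (e + 1) := by
  have hs : ∀ i, (if i ∈ ascents σ then 1 else 0) ≤ 1 := fun i => by split_ifs <;> omega
  have hsum : ∑ i, (if i ∈ ascents σ then 1 else 0) = (ascents σ).card := by simp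
  rw [← hsum, ← card_increasingWithSlack hs N]
  exact Nat.card_congr (Equiv.subtypeEquiv (σ.symm.arrowCongr (Equiv.refl _)) fun f => by
    simp [sort_eq_iff_ascents])

theorem sum_choose_add_card_ascents (N : ℕ) :
    ∑ σ : Equiv.Perm (Fin (e + 1)), (N + (ascents σ).card).choose (e + 1) = N ^ (e + 1) := by
  simp_rw [← card_sort_eq]
  rw [← Nat.card_sigma, Nat.card_congr (Equiv.sigmaFiberEquiv Tuple.sort), Nat.card_fun]
  simp

end Worpitzky

lemma sum_A_mul_eq_sum_perm {R : Type*} [CommSemiring R] (e : ℕ) (F : ℕ → R) :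
    ∑ j ∈ Icc 1 (e + 1), (A (e + 1) j : R) * F j =
      ∑ σ : Equiv.Perm (Fin (e + 1)), F ((descents (e + 1) σ).card + 1) := by
  have hmaps (σ : Equiv.Perm (Fin (e + 1))) :
      (descents (e + 1) σ).card + 1 ∈ Icc 1 (e + 1) := by
    have := card_descents_add_card_ascents σ
    simp only [mem_Icc]
    omega
  rw [← sum_fiberwise_of_maps_to fun σ _ => hmaps σ]
  refine sum_congr rfl fun j hj => ?_
  rw [sum_congr rfl fun σ hσ => by rw [(mem_filter.1 hσ).2], sum_const, nsmul_eq_mul, A]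
  congr 3
  ext σ
  simp only [mem_filter, mem_univ, true_and]
  have := (mem_Icc.1 hj).1
  omega

lemma multichooseZ_sub_eq_choose {e a b : ℕ} (hab : a + b = e) (N : ℕ) :
    multichooseZ (e + 2) ((N : ℤ) - (a + 1 : ℕ)) = (N + b).choose (e + 1) := by
  rcases lt_or_ge N (a + 1) with hN | hN
  · rw [multichooseZ_of_neg (by omega), Nat.choose_eq_zero_of_lt (by omega), Nat.cast_zero]
  · obtain ⟨k, rfl⟩ : ∃ k, N = k + (a + 1) := ⟨N - (a + 1), by omega⟩
    rw [Nat.cast_add, add_sub_cancel_right, multichooseZ_natCast, Nat.multichoose_eq,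
      show e + 2 + k - 1 = k + (e + 1) by omega, show k + (a + 1) + b = k + (e + 1) by omega,
      Nat.choose_symm_add]

theorem sum_A_mul_multichooseZ (e : ℕ) (N : ℤ) :
    ∑ j ∈ Icc 1 (e + 1), (A (e + 1) j : ℤ) * multichooseZ (e + 2) (N - j) =
      max N 0 ^ (e + 1) := by
  rw [sum_A_mul_eq_sum_perm]
  rcases lt_or_ge N 0 with hN | hN
  · rw [max_eq_right hN.le, zero_pow (Nat.succ_ne_zero e)]
    exact sum_eq_zero fun σ _ => multichooseZ_of_neg (by omega)
  · lift N to ℕ using hN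
    rw [max_eq_left (Nat.cast_nonneg N), ← Nat.cast_pow, ← sum_choose_add_card_ascents,
      Nat.cast_sum]
    exact sum_congr rfl fun σ _ =>
      multichooseZ_sub_eq_choose (card_descents_add_card_ascents σ) N

theorem sum_C_mul_A (e s : ℕ) (M : ℤ) :
    ∑ j ∈ Icc 1 (e + 1), (C s (e + 2) (M - j) : ℤ) * A (e + 1) j =
      ∑ k ∈ range (e + 3),
        (-1) ^ k * ((e + 2).choose k : ℤ) * max (M - k * (s + 1)) 0 ^ (e + 1) := by
  simp_rw [C_eq_sum_multichooseZ, sum_mul]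
  rw [sum_comm]
  refine sum_congr rfl fun k _ => ?_
  rw [← sum_A_mul_multichooseZ, mul_sum]
  refine sum_congr rfl fun j _ => ?_
  rw [sub_right_comm]
  ring

lemma sum_alternating_choose_mul_max_pow_eq_A {e i : ℕ} (hi : i ∈ Icc 1 (e + 1)) :
    ∑ k ∈ range (e + 3), (-1) ^ k * ((e + 2).choose k : ℤ) * max ((i : ℤ) - k) 0 ^ (e + 1) =
      A (e + 1) i := by
  have := sum_C_mul_A e 0 i
  simp only [C_bound_zero, CharP.cast_eq_zero, zero_add, mul_one, sub_eq_zero, Nat.cast_inj] at this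
  rw [← this]
  simp [hi]

theorem stmt0_general (d r i : ℕ) (hr : 1 ≤ r) (hi1 : 1 ≤ i) (hid : i ≤ d) :
    ∑ j ∈ Finset.Icc 1 d, C (r - 1) (d + 1) ((i : ℤ) * r - j) * A d j = r ^ d * A d i := by
  obtain ⟨e, rfl⟩ : ∃ e, d = e + 1 := ⟨d - 1, by omega⟩
  zify
  rw [sum_C_mul_A, Nat.cast_sub hr, Nat.cast_one, sub_add_cancel,
    ← sum_alternating_choose_mul_max_pow_eq_A (mem_Icc.2 ⟨hi1, hid⟩), mul_sum]
  refine sum_congr rfl fun k _ => ?_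
  have homog : max (((i : ℤ) - k) * r) 0 = max ((i : ℤ) - k) 0 * r := by
    rw [max_mul_of_nonneg _ _ (Nat.cast_nonneg r), zero_mul]
  rw [← sub_mul, homog, mul_pow]
  ring

/-- Brenti–Welker identity. -/
theorem stmt0 (d r i : ℕ) (hd : 1 ≤ d) (hr : 1 ≤ r) (hi1 : 1 ≤ i) (hid : i ≤ d) :
    ∑ j ∈ Finset.Icc 1 d, C (r - 1) (d + 1) ((i : ℤ) * r - j) * A d j = r ^ d * A d i :=
  stmt0_general d r i hr hi1 hid
end
end

section
/- Let x ∈ R^{d+1} with integer coordinate sum, let O(x) = {t : {x_t} > 0}, and o(x) = Σ_{t ∈ O(x)} {x_t}. Then the set of pairs (v,j) with v ∈ Z^{d+1}, 1 ≤ j ≤ d, and x ∈ v + Δ_{d,j} is exactly {(⌊x⌋ - e_T, |T| + o(x)) : T ⊆ [d+1] \ O(x), 1 ≤ |T| + o(x) ≤ d}, where e_T is the 0/1 indicator vector of T and ⌊x⌋ is the coordinatewise floor. -/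
open scoped Classical BigOperators

noncomputable section

theorem stmt3 (d : ℕ) (x : Fin (d + 1) → ℝ) (hx : ∃ m : ℤ, ∑ t, x t = m) :
    {p : (Fin (d + 1) → ℤ) × ℕ | 1 ≤ p.2 ∧ p.2 ≤ d ∧ x ∈ latTranslate d p.1 p.2} =
      {p : (Fin (d + 1) → ℤ) × ℕ | ∃ T : Finset (Fin (d + 1)),
        (∀ t ∈ T, Int.fract (x t) = 0) ∧
        p.1 = (fun t => ⌊x t⌋ - if t ∈ T then 1 else 0) ∧
        (p.2 : ℝ) = T.card + ∑ t, Int.fract (x t) ∧ 1 ≤ p.2 ∧ p.2 ≤ d} := by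
  clear hx
  ext ⟨v, j⟩
  simp only [Set.mem_setOf_eq, latTranslate, Δ, Set.mem_setOf_eq]
  constructor
  · rintro ⟨h1, h2, hsum, hbd⟩
    have hT : ∀ t, v t = ⌊x t⌋ - 1 → Int.fract (x t) = 0 := by
      intro t ht
      have hb := hbd t
      have hle : x t ≤ (⌊x t⌋ : ℝ) := by
        have : x t - v t ≤ 1 := hb.2
        rw [ht] at this; push_cast at this; linarith
      have hxe : x t = (⌊x t⌋ : ℝ) := le_antisymm hle (Int.floor_le _)
      rw [hxe, Int.fract_intCast]
    have hfun : ∀ t, v t = ⌊x t⌋ - if v t = ⌊x t⌋ - 1 then 1 else 0 := by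
      intro t
      by_cases h : v t = ⌊x t⌋ - 1
      · simp [h]
      · simp only [h, if_false, sub_zero]
        have hb := hbd t
        have hle : (v t : ℝ) ≤ x t := by linarith [hb.1]
        have h1' : v t ≤ ⌊x t⌋ := Int.le_floor.mpr hle
        have h2' : (⌊x t⌋ : ℝ) ≤ (v t : ℝ) + 1 := by
          have := Int.floor_le (x t); linarith [hb.2]
        have h2'' : ⌊x t⌋ ≤ v t + 1 := by exact_mod_cast h2'
        omega
    refine ⟨Finset.univ.filter (fun t => v t = ⌊x t⌋ - 1), ?_, ?_, ?_, h1, h2⟩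
    · intro t ht
      exact hT t (Finset.mem_filter.mp ht).2
    · funext t
      simp only [Finset.mem_filter, Finset.mem_univ, true_and]
      exact hfun t
    · have hterm : ∀ t, x t - (v t : ℝ) =
          Int.fract (x t) + (if v t = ⌊x t⌋ - 1 then (1 : ℝ) else 0) := by
        intro t
        rw [Int.fract]
        have := hfun t
        by_cases h : v t = ⌊x t⌋ - 1
        · rw [h]; simp [h]; rw [Int.fract]; push_cast; ring
        · simp only [h, if_false, add_zero]
          have hv : v t = ⌊x t⌋ := by rw [this]; simp [h]
          rw [hv]
      calc (j : ℝ) = ∑ t, (x t - (v t : ℝ)) := hsum.symm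
        _ = ∑ t, (Int.fract (x t) + (if v t = ⌊x t⌋ - 1 then (1 : ℝ) else 0)) := by
            exact Finset.sum_congr rfl (fun t _ => hterm t)
        _ = (∑ t, (if v t = ⌊x t⌋ - 1 then (1 : ℝ) else 0)) + ∑ t, Int.fract (x t) := by
            rw [Finset.sum_add_distrib]; ring
        _ = ((Finset.univ.filter (fun t => v t = ⌊x t⌋ - 1)).card : ℝ)
              + ∑ t, Int.fract (x t) := by rw [Finset.sum_boole]
  · rintro ⟨T, hT, hv, hj, h1, h2⟩
    have hterm : ∀ t, x t - (v t : ℝ) =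
        Int.fract (x t) + (if t ∈ T then (1 : ℝ) else 0) := by
      intro t
      have : v t = ⌊x t⌋ - if t ∈ T then 1 else 0 := by rw [hv]
      rw [this, Int.fract]
      push_cast
      split <;> ring
    refine ⟨h1, h2, ?_, ?_⟩
    · calc ∑ t, (x t - (v t : ℝ))
          = ∑ t, (Int.fract (x t) + (if t ∈ T then (1 : ℝ) else 0)) :=
            Finset.sum_congr rfl (fun t _ => hterm t)
        _ = (∑ t, (if t ∈ T then (1 : ℝ) else 0)) + ∑ t, Int.fract (x t) := by
            rw [Finset.sum_add_distrib]; ring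
        _ = (T.card : ℝ) + ∑ t, Int.fract (x t) := by
            rw [Finset.sum_boole]
            congr 2
            simp [Finset.filter_mem_eq_inter]
        _ = j := hj.symm
    · intro t
      rw [hterm t]
      constructor
      · have := Int.fract_nonneg (x t)
        split <;> linarith
      · by_cases h : t ∈ T
        · rw [hT t h]; simp [h]
        · have := Int.fract_lt_one (x t)
          simp [h]; linarith
end
end

section
/- Let u, v ∈ Z^{d+1}, 1 ≤ j_1, j_2 ≤ d, with (u + Δ_{d,j_1}) ∩ (v + Δ_{d,j_2}) nonempty. Set X_u = {t : v_t = u_t + 1} and X_v = {t : u_t = v_t + 1}. Then (u + Δ_{d,j_1}) ∩ (v + Δ_{d,j_2}) = u + e_{X_u} + conv{e_T : T ⊆ [d+1] \ (X_u ∪ X_v), |T| = j_1 - |X_u|}. -/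
open scoped Classical BigOperators

noncomputable section

/-!
Nonemptiness forces `|u t - v t| ≤ 1` for every `t`, so a point of both unit boxes
`u + [0,1]^{d+1}` and `v + [0,1]^{d+1}` has coordinate `u t + 1` on `X_u`, `u t` on `X_v`, and is
free in `[u t, u t + 1]` elsewhere; since `∑ (u - v) = j₂ - j₁`, the second sum constraint follows
from the first. Hence the intersection is `u + e_{X_u}` plus the hypersimplex of level
`j₁ - |X_u|` on the remaining coordinates. That polytope is the convex hull of its `0/1` points by
Krein–Milman: a point with one fractional coordinate has a second one (the sum is an integer), and
shifting mass between the two exhibits it as the midpoint of a segment in the polytope.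
-/

open Set

section Hypersimplex

variable {ι : Type*} [Fintype ι]

def hypersimplexOn (s : Set ι) (k : ℕ) : Set (ι → ℝ) :=
  {y | (∀ t, y t ∈ Icc 0 1) ∧ (∀ t ∉ s, y t = 0) ∧ ∑ t, y t = k}

theorem isCompact_hypersimplexOn (s : Set ι) (k : ℕ) : IsCompact (hypersimplexOn s k) := by
  have hclosed : IsClosed (hypersimplexOn s k) := by
    simp only [hypersimplexOn, ofPred_and, ofPred_forall]
    exact (isClosed_iInter fun t => isClosed_Icc.preimage (continuous_apply t)).inter
      ((isClosed_iInter fun t => isClosed_iInter fun _ =>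
        isClosed_eq (continuous_apply t) continuous_const).inter
      (isClosed_eq (continuous_finsetSum _ fun t _ => continuous_apply t) continuous_const))
  exact (isCompact_univ_pi fun _ => isCompact_Icc).of_isClosed_subset hclosed
    fun y hy t _ => hy.1 t

theorem convex_hypersimplexOn (s : Set ι) (k : ℕ) : Convex ℝ (hypersimplexOn s k) := by
  rintro y ⟨hy, hys, hyk⟩ z ⟨hz, hzs, hzk⟩ a b ha hb hab
  refine ⟨fun t => convex_Icc (0 : ℝ) 1 (hy t) (hz t) ha hb hab, fun t ht => ?_, ?_⟩
  · simp [hys t ht, hzs t ht]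
  · simp only [Pi.add_apply, Pi.smul_apply, smul_eq_mul, Finset.sum_add_distrib,
      ← Finset.mul_sum, hyk, hzk]
    linear_combination (k : ℝ) * hab

variable [DecidableEq ι]

theorem indicator_mem_hypersimplexOn {s : Set ι} {T : Finset ι} (hT : ∀ t ∈ T, t ∈ s) :
    (fun t => if t ∈ T then (1 : ℝ) else 0) ∈ hypersimplexOn s T.card := by
  refine ⟨fun t => ?_, fun t ht => if_neg fun h => ht (hT t h), by simp⟩
  by_cases h : t ∈ T <;> simp [h]

theorem exists_ne_mem_Ioo_of_sum_eq {y : ι → ℝ} {k : ℕ} (hy : ∀ t, y t ∈ Icc 0 1)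
    (hyk : ∑ t, y t = k) {t₁ : ι} (ht₁ : y t₁ ∈ Ioo 0 1) : ∃ t₂ ≠ t₁, y t₂ ∈ Ioo 0 1 := by
  by_contra! h
  have h01 : ∀ t ∈ Finset.univ.erase t₁, y t = if y t = 1 then 1 else 0 := by
    intro t ht
    split_ifs with h1
    · exact h1
    · rcases (hy t).1.eq_or_lt with h0 | hpos
      · exact h0.symm
      · have hge : 1 ≤ y t := not_lt.1 fun hlt => h t (Finset.ne_of_mem_erase ht) ⟨hpos, hlt⟩
        exact absurd (le_antisymm (hy t).2 hge) h1
  rw [← Finset.add_sum_erase _ _ (Finset.mem_univ t₁), Finset.sum_congr rfl h01,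
    Finset.sum_boole] at hyk
  generalize (Finset.univ.erase t₁ |>.filter (fun t => y t = 1)).card = m at hyk
  have hmk : m < k := by exact_mod_cast (show (m : ℝ) < k by linarith [ht₁.1])
  have hkm : k < m + 1 := by exact_mod_cast (show (k : ℝ) < m + 1 by linarith [ht₁.2])
  omega

theorem add_smul_single_sub_single_mem_hypersimplexOn {s : Set ι} {k : ℕ} {y : ι → ℝ}
    (hy : y ∈ hypersimplexOn s k) {t₁ t₂ : ι} (hne : t₂ ≠ t₁) (ht₁ : t₁ ∈ s) (ht₂ : t₂ ∈ s)
    {ε : ℝ} (hε₁ : y t₁ + ε ∈ Icc 0 1) (hε₂ : y t₂ - ε ∈ Icc 0 1) :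
    y + ε • (Pi.single t₁ 1 - Pi.single t₂ 1) ∈ hypersimplexOn s k := by
  obtain ⟨hy01, hys, hyk⟩ := hy
  refine ⟨fun t => ?_, fun t ht => ?_, ?_⟩
  · by_cases h₁ : t = t₁
    · subst h₁; simpa [hne] using hε₁
    · by_cases h₂ : t = t₂
      · subst h₂; simpa [h₁, sub_eq_add_neg] using hε₂
      · simpa [h₁, h₂] using hy01 t
  · have h₁ : t ≠ t₁ := fun h => ht (h ▸ ht₁)
    have h₂ : t ≠ t₂ := fun h => ht (h ▸ ht₂)
    simp [h₁, h₂, hys t ht]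
  · simp [Finset.sum_add_distrib, ← Finset.mul_sum, Finset.sum_sub_distrib, hyk]

theorem eq_zero_or_eq_one_of_mem_extremePoints_hypersimplexOn {s : Set ι} {k : ℕ} {y : ι → ℝ}
    (hy : y ∈ (hypersimplexOn s k).extremePoints ℝ) (t₁ : ι) : y t₁ = 0 ∨ y t₁ = 1 := by
  obtain ⟨hyP, hext⟩ := hy
  by_contra! h
  have ht₁ : y t₁ ∈ Ioo 0 1 := ⟨(hyP.1 t₁).1.lt_of_ne' h.1, (hyP.1 t₁).2.lt_of_ne h.2⟩
  obtain ⟨t₂, hne, ht₂⟩ := exists_ne_mem_Ioo_of_sum_eq hyP.1 hyP.2.2 ht₁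
  have hs (t : ι) (ht : y t ∈ Ioo 0 1) : t ∈ s := by
    by_contra hts; exact ht.1.ne' (hyP.2.1 t hts)
  set ε := min (min (y t₁) (1 - y t₁)) (min (y t₂) (1 - y t₂))
  have hε : 0 < ε :=
    lt_min (lt_min ht₁.1 (by linarith [ht₁.2])) (lt_min ht₂.1 (by linarith [ht₂.2]))
  have e₁ : ε ≤ y t₁ := (min_le_left _ _).trans (min_le_left _ _)
  have e₂ : ε ≤ 1 - y t₁ := (min_le_left _ _).trans (min_le_right _ _)
  have e₃ : ε ≤ y t₂ := (min_le_right _ _).trans (min_le_left _ _)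
  have e₄ : ε ≤ 1 - y t₂ := (min_le_right _ _).trans (min_le_right _ _)
  have hplus := add_smul_single_sub_single_mem_hypersimplexOn hyP hne (hs _ ht₁) (hs _ ht₂)
    (ε := ε) ⟨by linarith, by linarith⟩ ⟨by linarith, by linarith⟩
  have hminus := add_smul_single_sub_single_mem_hypersimplexOn hyP hne (hs _ ht₁) (hs _ ht₂)
    (ε := -ε) ⟨by linarith, by linarith⟩ ⟨by linarith, by linarith⟩
  have hseg := hext hminus hplus
    (by rw [neg_smul, ← sub_eq_add_neg]; exact mem_openSegment_sub_add y _)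
  exact hε.ne' (by simpa [hne.symm] using congrFun hseg t₁)

theorem convexHull_indicators_eq_hypersimplexOn (s : Set ι) (k : ℕ) :
    convexHull ℝ {y : ι → ℝ | ∃ T : Finset ι, (∀ t ∈ T, t ∈ s) ∧ T.card = k ∧
      y = fun t => if t ∈ T then 1 else 0} = hypersimplexOn s k := by
  set V := {y : ι → ℝ | ∃ T : Finset ι, (∀ t ∈ T, t ∈ s) ∧ T.card = k ∧
      y = fun t => if t ∈ T then 1 else 0}
  have hV : V ⊆ hypersimplexOn s k := by
    rintro _ ⟨T, hT, rfl, rfl⟩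
    exact indicator_mem_hypersimplexOn hT
  have hVfin : V.Finite :=
    (Set.finite_range fun T : Finset ι => fun t => if t ∈ T then (1 : ℝ) else 0).subset
      fun _ ⟨T, _, _, hy⟩ => ⟨T, hy.symm⟩
  have hext : (hypersimplexOn s k).extremePoints ℝ ⊆ V := by
    intro y hy
    have h01 := eq_zero_or_eq_one_of_mem_extremePoints_hypersimplexOn hy
    have hy_eq : y = fun t => if t ∈ Finset.univ.filter (y · = 1) then 1 else 0 := by
      funext t
      rcases h01 t with h | h <;> simp [h]
    refine ⟨Finset.univ.filter (y · = 1), fun t ht => ?_, ?_, hy_eq⟩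
    · by_contra hts
      simp [hy.1.2.1 t hts] at ht
    · have hsum := hy.1.2.2
      rw [hy_eq] at hsum
      simpa using hsum
  refine (convexHull_min hV (convex_hypersimplexOn s k)).antisymm ?_
  calc hypersimplexOn s k
      = closure (convexHull ℝ ((hypersimplexOn s k).extremePoints ℝ)) :=
        (closure_convexHull_extremePoints (isCompact_hypersimplexOn s k)
          (convex_hypersimplexOn s k)).symm
    _ ⊆ closure (convexHull ℝ V) := closure_mono (convexHull_mono hext)
    _ = convexHull ℝ V := (hVfin.isCompact_convexHull (𝕜 := ℝ)).isClosed.closure_eq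

end Hypersimplex

section LatticeTranslates

theorem sub_mem_Icc_and_sub_mem_Icc_iff {a b : ℤ} (hba : b ≤ a + 1) (hab : a ≤ b + 1) (r : ℝ) :
    r - a ∈ Icc (0 : ℝ) 1 ∧ r - b ∈ Icc (0 : ℝ) 1 ↔
      r - (a + if b = a + 1 then 1 else 0) ∈ Icc 0 1 ∧
        (b = a + 1 ∨ a = b + 1 → r - (a + if b = a + 1 then 1 else 0) = 0) := by
  obtain rfl | rfl | rfl : b = a + 1 ∨ a = b + 1 ∨ b = a := by omega
  all_goals
    simp only [mem_Icc]
    push_cast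
    grind

variable {d : ℕ} {u v : Fin (d + 1) → ℤ} {j₁ j₂ : ℕ} {x₀ : Fin (d + 1) → ℝ}

theorem le_add_one_of_mem_latTranslate_inter
    (hx₀ : x₀ ∈ latTranslate d u j₁ ∩ latTranslate d v j₂) (t : Fin (d + 1)) : v t ≤ u t + 1 := by
  have h₁ := (hx₀.1.2 t).2
  have h₂ := (hx₀.2.2 t).1
  exact_mod_cast (by linarith : (v t : ℝ) ≤ u t + 1)

theorem sum_sub_of_mem_latTranslate_inter
    (hx₀ : x₀ ∈ latTranslate d u j₁ ∩ latTranslate d v j₂) :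
    ∑ t, ((u t : ℝ) - v t) = j₂ - j₁ := by
  rw [← hx₀.1.1, ← hx₀.2.1, ← Finset.sum_sub_distrib]
  exact Finset.sum_congr rfl fun t _ => by ring

theorem card_le_of_mem_latTranslate_inter
    (hx₀ : x₀ ∈ latTranslate d u j₁ ∩ latTranslate d v j₂) :
    (Finset.univ.filter fun t => v t = u t + 1).card ≤ j₁ := by
  have hone : ∀ t ∈ Finset.univ.filter fun t => v t = u t + 1, x₀ t - u t = 1 := by
    intro t ht
    have h₁ := (hx₀.1.2 t).2
    have h₂ := (hx₀.2.2 t).1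
    simp only [(Finset.mem_filter.1 ht).2, Int.cast_add, Int.cast_one] at h₁ h₂
    linarith
  have : ((Finset.univ.filter fun t => v t = u t + 1).card : ℝ) ≤ j₁ := calc
    _ = ∑ t ∈ Finset.univ.filter fun t => v t = u t + 1, (x₀ t - u t) := by
      rw [Finset.sum_congr rfl hone]; simp
    _ ≤ ∑ t, (x₀ t - u t) :=
      Finset.sum_le_sum_of_subset_of_nonneg (Finset.subset_univ _) fun t _ _ => (hx₀.1.2 t).1
    _ = j₁ := hx₀.1.1
  exact_mod_cast this

theorem latTranslate_inter_eq_image_hypersimplexOn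
    (hx₀ : x₀ ∈ latTranslate d u j₁ ∩ latTranslate d v j₂) :
    latTranslate d u j₁ ∩ latTranslate d v j₂ =
      (fun y => (fun t => (u t : ℝ)) + ind d (Finset.univ.filter fun t => v t = u t + 1) + y) ''
        hypersimplexOn {t | ¬(v t = u t + 1) ∧ ¬(u t = v t + 1)}
          (j₁ - (Finset.univ.filter fun t => v t = u t + 1).card) := by
  ext x
  have hcoord (t : Fin (d + 1)) := sub_mem_Icc_and_sub_mem_Icc_iff
    (le_add_one_of_mem_latTranslate_inter hx₀ t)
    (le_add_one_of_mem_latTranslate_inter (mem_inter hx₀.2 hx₀.1) t) (x t)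
  have hsum_sub : ∑ t, (x t - (u t + if v t = u t + 1 then 1 else 0)) =
      ∑ t, (x t - u t) - (Finset.univ.filter fun t => v t = u t + 1).card := by
    simp only [sub_add_eq_sub_sub, Finset.sum_sub_distrib, Finset.sum_boole]
  have hsum_v : ∑ t, (x t - v t) = ∑ t, (x t - u t) + (j₂ - j₁) := by
    rw [← sum_sub_of_mem_latTranslate_inter hx₀, ← Finset.sum_add_distrib]
    exact Finset.sum_congr rfl fun t _ => by ring
  rw [image_add_left, mem_preimage, neg_add_eq_sub]
  simp only [hypersimplexOn, latTranslate, Δ, mem_ofPred_eq, mem_inter_iff, Pi.sub_apply,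
    Pi.add_apply, ind, Finset.mem_filter, Finset.mem_univ, true_and, not_and_or, not_not,
    Nat.cast_sub (card_le_of_mem_latTranslate_inter hx₀), hsum_sub, hsum_v]
  constructor
  · rintro ⟨⟨hu, hu01⟩, -, hv01⟩
    have h := fun t => (hcoord t).1 ⟨hu01 t, hv01 t⟩
    exact ⟨fun t => (h t).1, fun t => (h t).2, by rw [hu]⟩
  · rintro ⟨h01, h0, hs⟩
    have h := fun t => (hcoord t).2 ⟨h01 t, h0 t⟩
    have hu : ∑ t, (x t - u t) = j₁ := by linarith
    exact ⟨⟨hu, fun t => (h t).1⟩, by rw [hu]; ring, fun t => (h t).2⟩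

end LatticeTranslates

theorem stmt6_general (d : ℕ) (u v : Fin (d + 1) → ℤ) (j1 j2 : ℕ)
    (hne : (latTranslate d u j1 ∩ latTranslate d v j2).Nonempty) :
    latTranslate d u j1 ∩ latTranslate d v j2 =
      (fun y => (fun t => (u t : ℝ)) +
          ind d (Finset.univ.filter (fun t => v t = u t + 1)) + y) ''
        convexHull ℝ {y : Fin (d + 1) → ℝ | ∃ T : Finset (Fin (d + 1)),
          (∀ t ∈ T, ¬(v t = u t + 1) ∧ ¬(u t = v t + 1)) ∧
          T.card = j1 - (Finset.univ.filter (fun t => v t = u t + 1)).card ∧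
          y = ind d T} := by
  obtain ⟨x₀, hx₀⟩ := hne
  rw [latTranslate_inter_eq_image_hypersimplexOn hx₀, ← convexHull_indicators_eq_hypersimplexOn]
  rfl

theorem stmt6 (d : ℕ) (u v : Fin (d + 1) → ℤ) (j1 j2 : ℕ)
    (h11 : 1 ≤ j1) (h1d : j1 ≤ d) (h21 : 1 ≤ j2) (h2d : j2 ≤ d)
    (hne : (latTranslate d u j1 ∩ latTranslate d v j2).Nonempty) :
    latTranslate d u j1 ∩ latTranslate d v j2 =
      (fun y => (fun t => (u t : ℝ)) +
          ind d (Finset.univ.filter (fun t => v t = u t + 1)) + y) ''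
        convexHull ℝ {y : Fin (d + 1) → ℝ | ∃ T : Finset (Fin (d + 1)),
          (∀ t ∈ T, ¬(v t = u t + 1) ∧ ¬(u t = v t + 1)) ∧
          T.card = j1 - (Finset.univ.filter (fun t => v t = u t + 1)).card ∧
          y = ind d T} :=
  stmt6_general d u v j1 j2 hne
end
end

section
/- Let u, v ∈ Z^{d+1} and 1 ≤ j_1, j_2 ≤ d. The intersection of the translates u + Δ_{d,j_1} and v + Δ_{d,j_2} is a face of u + Δ_{d,j_1} (and, by symmetry, a face of v + Δ_{d,j_2}). -/
open scoped Classical BigOperators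

noncomputable section

lemma mem_latTranslate {d : ℕ} {w : Fin (d + 1) → ℤ} {j : ℕ} {x : Fin (d + 1) → ℝ} :
    x ∈ latTranslate d w j ↔
      (∑ t, (x t - (w t : ℝ))) = j ∧ ∀ t, 0 ≤ x t - (w t : ℝ) ∧ x t - (w t : ℝ) ≤ 1 := by
  simp [latTranslate, Δ]

lemma face_aux (d : ℕ) (u v : Fin (d + 1) → ℤ) (j1 j2 : ℕ) :
    IsFace (latTranslate d u j1) (latTranslate d u j1 ∩ latTranslate d v j2) := by
  by_cases hne : (latTranslate d u j1 ∩ latTranslate d v j2).Nonempty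
  swap
  · exact Or.inl (Set.not_nonempty_iff_eq_empty.mp hne)
  obtain ⟨x0, hx0u, hx0v⟩ := hne
  right
  set c : Fin (d + 1) → ℝ := fun t => (v t : ℝ) - (u t : ℝ) with hcdef
  have hcv : ∀ t, c t = ((v t - u t : ℤ) : ℝ) := fun t => by simp [hcdef]
  -- c t ∈ {-1,0,1}
  have hc : ∀ t, c t = -1 ∨ c t = 0 ∨ c t = 1 := by
    intro t
    obtain ⟨h1, h2⟩ := (mem_latTranslate.mp hx0u).2 t
    obtain ⟨h3, h4⟩ := (mem_latTranslate.mp hx0v).2 t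
    have hb1' : (-1 : ℤ) ≤ v t - u t := by
      have : (-1 : ℝ) ≤ ((v t - u t : ℤ) : ℝ) := by push_cast; linarith
      exact_mod_cast this
    have hb2' : v t - u t ≤ 1 := by
      have : ((v t - u t : ℤ) : ℝ) ≤ 1 := by push_cast; linarith
      exact_mod_cast this
    have h : v t - u t = -1 ∨ v t - u t = 0 ∨ v t - u t = 1 := by omega
    rcases h with h | h | h
    · left; rw [hcv t, h]; norm_num
    · right; left; rw [hcv t, h]; norm_num
    · right; right; rw [hcv t, h]; norm_num
  refine ⟨{ toFun := fun x => ∑ t, c t * x t,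
            map_add' := by intro x y; simp [mul_add, Finset.sum_add_distrib],
            map_smul' := by
              intro r x
              simp only [smul_eq_mul, RingHom.id_apply, Pi.smul_apply]
              rw [Finset.mul_sum]
              exact Finset.sum_congr rfl fun t _ => by ring }, ?_⟩
  -- per-coordinate upper bound on u-translate
  have hub : ∀ x ∈ latTranslate d u j1, ∀ t, c t * x t ≤ c t * (u t : ℝ) + max (c t) 0 := by
    intro x hx t
    obtain ⟨h1, h2⟩ := (mem_latTranslate.mp hx).2 t
    rcases le_or_gt (c t) 0 with h | h
    · have h5 : c t * (x t - u t) ≤ 0 := mul_nonpos_of_nonpos_of_nonneg h h1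
      have hm : max (c t) 0 = 0 := max_eq_right h
      nlinarith
    · have h5 : c t * (x t - u t) ≤ c t * 1 := mul_le_mul_of_nonneg_left h2 h.le
      have hm : max (c t) 0 = c t := max_eq_left h.le
      nlinarith
  -- equality on the intersection
  have heq : ∀ x, x ∈ latTranslate d u j1 → x ∈ latTranslate d v j2 →
      ∀ t, c t * x t = c t * (u t : ℝ) + max (c t) 0 := by
    intro x hxu hxv t
    obtain ⟨h1, h2⟩ := (mem_latTranslate.mp hxu).2 t
    obtain ⟨h3, h4⟩ := (mem_latTranslate.mp hxv).2 t
    have hvu : (v t : ℝ) = (u t : ℝ) + c t := by rw [hcdef]; ring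
    rcases hc t with h | h | h
    · have hx : x t = u t := by rw [hvu, h] at h4; linarith
      rw [h, hx]; norm_num
    · rw [h]; norm_num
    · have hx : x t = u t + 1 := by rw [hvu, h] at h3; linarith
      rw [h, hx]; norm_num
  -- sums relation: j2 = j1 - ∑ c
  have hsum0 : (j2 : ℝ) = (j1 : ℝ) - ∑ t, c t := by
    have hu := (mem_latTranslate.mp hx0u).1
    have hv := (mem_latTranslate.mp hx0v).1
    have he : ∑ t, (x0 t - (v t : ℝ)) = (∑ t, (x0 t - (u t : ℝ))) - ∑ t, c t := by
      rw [← Finset.sum_sub_distrib]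
      exact Finset.sum_congr rfl fun t _ => by rw [hcdef]; ring
    rw [he, hu] at hv
    linarith
  ext x
  simp only [Set.mem_inter_iff, Set.mem_setOf_eq, LinearMap.coe_mk, AddHom.coe_mk]
  constructor
  · rintro ⟨hxu, hxv⟩
    refine ⟨hxu, fun y hy => ?_⟩
    calc ∑ t, c t * y t ≤ ∑ t, (c t * (u t : ℝ) + max (c t) 0) :=
          Finset.sum_le_sum fun t _ => hub y hy t
      _ = ∑ t, c t * x t := (Finset.sum_congr rfl fun t _ => (heq x hxu hxv t).symm)
  · rintro ⟨hxu, hmax⟩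
    refine ⟨hxu, ?_⟩
    have hfx0 : ∑ t, c t * x0 t = ∑ t, (c t * (u t : ℝ) + max (c t) 0) :=
      Finset.sum_congr rfl fun t _ => heq x0 hx0u hx0v t
    have hle : ∑ t, c t * x t ≤ ∑ t, (c t * (u t : ℝ) + max (c t) 0) :=
      Finset.sum_le_sum fun t _ => hub x hxu t
    have hge : ∑ t, (c t * (u t : ℝ) + max (c t) 0) ≤ ∑ t, c t * x t := by
      rw [← hfx0]; exact hmax x0 hx0u
    have hfeq : ∑ t, c t * x t = ∑ t, (c t * (u t : ℝ) + max (c t) 0) := le_antisymm hle hge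
    have hterm : ∀ t, c t * x t = c t * (u t : ℝ) + max (c t) 0 := by
      intro t
      have h := (Finset.sum_eq_sum_iff_of_le (fun i _ => hub x hxu i)).mp hfeq
      exact h t (Finset.mem_univ t)
    rw [mem_latTranslate]
    have hcoord : ∀ t, 0 ≤ x t - (v t : ℝ) ∧ x t - (v t : ℝ) ≤ 1 := by
      intro t
      obtain ⟨h1, h2⟩ := (mem_latTranslate.mp hxu).2 t
      have hvu : (v t : ℝ) = (u t : ℝ) + c t := by rw [hcdef]; ring
      have ht := hterm t
      rcases hc t with h | h | h
      · rw [h] at ht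
        have hx : x t = u t := by
          have hm : max (-1 : ℝ) 0 = 0 := by norm_num
          rw [hm] at ht; linarith
        rw [hvu, h, hx]; constructor <;> linarith
      · rw [hvu, h]; constructor <;> linarith
      · rw [h] at ht
        have hx : x t = u t + 1 := by
          have hm : max (1 : ℝ) 0 = 1 := by norm_num
          rw [hm] at ht; linarith
        rw [hvu, h, hx]; constructor <;> linarith
    refine ⟨?_, hcoord⟩
    have hu := (mem_latTranslate.mp hxu).1
    have he : ∑ t, (x t - (v t : ℝ)) = (∑ t, (x t - (u t : ℝ))) - ∑ t, c t := by
      rw [← Finset.sum_sub_distrib]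
      exact Finset.sum_congr rfl fun t _ => by rw [hcdef]; ring
    rw [he, hu, ← hsum0]

theorem stmt7 (d : ℕ) (u v : Fin (d + 1) → ℤ) (j1 j2 : ℕ)
    (h11 : 1 ≤ j1) (h1d : j1 ≤ d) (h21 : 1 ≤ j2) (h2d : j2 ≤ d) :
    IsFace (latTranslate d u j1) (latTranslate d u j1 ∩ latTranslate d v j2) ∧
    IsFace (latTranslate d v j2) (latTranslate d u j1 ∩ latTranslate d v j2) := by
  refine ⟨face_aux d u v j1 j2, ?_⟩
  rw [Set.inter_comm]
  exact face_aux d v u j2 j1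
end
end

section
/- Fix integers d ≥ 1 and i. Any two distinct translates v + Δ_{d,j} (with v ∈ Z^{d+1}, Σ v_t = i - j, 1 ≤ j ≤ d) intersect in a common face of both; hence this family forms a polyhedral subdivision of the hyperplane Σ x_t = i. -/
/-!
Rounding the first coordinate of `x` up and the others down gives a lattice point `v` with
`x - v ∈ (0, 1] × [0, 1)^d`; when `∑ x` is an integer, `∑ (x - v)` is therefore an integer `j`
with `0 < j < d + 1`, so `x ∈ v + Δ_{d,j}`.

If `u + Δ_{d,j₁}` and `v + Δ_{d,j₂}` meet, then `v - u ∈ {-1, 0, 1}^{d+1}`, and the linear form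
`y ↦ (v - u) ⬝ᵥ y` attains its maximum over the cube `u + [0, 1]^{d+1}` exactly where it meets
`v + [0, 1]^{d+1}`. Both translates lie in the same hyperplane, so the maximisers over
`u + Δ_{d,j₁}` are exactly the common points.
-/

open scoped Classical BigOperators

noncomputable section

lemma mem_latTranslate_iff {d j : ℕ} {v : Fin (d + 1) → ℤ} {x : Fin (d + 1) → ℝ} :
    x ∈ latTranslate d v j ↔
      ∑ t, x t = ∑ t, (v t : ℝ) + j ∧ ∀ t, x t ∈ Set.Icc (v t : ℝ) (v t + 1) := by
  simp only [latTranslate, Δ, Set.mem_ofPred_eq, Finset.sum_sub_distrib, Set.mem_Icc,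
    sub_nonneg, sub_le_iff_le_add']
  constructor <;> rintro ⟨hsum, hbox⟩ <;> exact ⟨by linarith, hbox⟩

lemma exists_mem_latTranslate {d : ℕ} (hd : 1 ≤ d) {x : Fin (d + 1) → ℝ} {i : ℤ}
    (hx : ∑ t, x t = i) :
    ∃ j ∈ Finset.Icc 1 d, ∃ v : Fin (d + 1) → ℤ, ∑ t, v t = i - j ∧ x ∈ latTranslate d v j := by
  set v : Fin (d + 1) → ℤ := fun t => if t = 0 then ⌈x t⌉ - 1 else ⌊x t⌋
  have hbox : ∀ t, x t ∈ Set.Icc (v t : ℝ) (v t + 1) := by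
    intro t
    by_cases ht : t = 0 <;> simp only [v, ht, if_true, if_false, Set.mem_Icc] <;> push_cast
    · exact ⟨by linarith [Int.ceil_lt_add_one (x 0)], by linarith [Int.le_ceil (x 0)]⟩
    · exact ⟨Int.floor_le _, by linarith [Int.lt_floor_add_one (x t)]⟩
  have hfirst : (v 0 : ℝ) < x 0 := by
    simp only [v, if_true]; push_cast; linarith [Int.ceil_lt_add_one (x 0)]
  have hlast : x (Fin.last d) < v (Fin.last d) + 1 := by
    have hne : Fin.last d ≠ 0 := by simp [Fin.ext_iff]; omega
    simp only [v, hne, if_false]; exact Int.lt_floor_add_one _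
  set k : ℤ := i - ∑ t, v t with hk
  have hk_sum : ∑ t, (x t - v t) = k := by
    rw [Finset.sum_sub_distrib, hx, hk]; push_cast; ring
  have hk_pos : (0 : ℝ) < k := by
    rw [← hk_sum]
    exact Finset.sum_pos' (fun t _ => sub_nonneg.2 (hbox t).1)
      ⟨0, Finset.mem_univ _, sub_pos.2 hfirst⟩
  have hk_lt : (k : ℝ) < d + 1 := by
    calc (k : ℝ) = ∑ t, (x t - v t) := hk_sum.symm
      _ < ∑ _t : Fin (d + 1), (1 : ℝ) :=
        Finset.sum_lt_sum (fun t _ => by linarith [(hbox t).2])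
          ⟨Fin.last d, Finset.mem_univ _, by linarith⟩
      _ = d + 1 := by simp
  have hk1 : 1 ≤ k := by exact_mod_cast hk_pos
  have hkd : k ≤ d := by
    have : k < (d : ℤ) + 1 := by exact_mod_cast hk_lt
    omega
  clear_value k
  lift k to ℕ using by omega
  refine ⟨k, Finset.mem_Icc.2 ⟨by omega, by omega⟩, v, by omega, ?_⟩
  refine mem_latTranslate_iff.2 ⟨?_, hbox⟩
  rw [Finset.sum_sub_distrib, Int.cast_natCast] at hk_sum
  linarith

section UnitIntervals

variable {a b : ℤ} {y z : ℝ}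

lemma eq_sub_one_or_eq_or_eq_add_one_of_mem_Icc_inter
    (hz : z ∈ Set.Icc (a : ℝ) (a + 1) ∩ Set.Icc (b : ℝ) (b + 1)) :
    b = a - 1 ∨ b = a ∨ b = a + 1 := by
  obtain ⟨⟨ha, ha'⟩, hb, hb'⟩ := hz
  have h1 : b ≤ a + 1 := by exact_mod_cast (show (b : ℝ) ≤ a + 1 by linarith)
  have h2 : a ≤ b + 1 := by exact_mod_cast (show (a : ℝ) ≤ b + 1 by linarith)
  omega

lemma sub_mul_le_of_mem_Icc (hy : y ∈ Set.Icc (a : ℝ) (a + 1))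
    (hz : z ∈ Set.Icc (a : ℝ) (a + 1) ∩ Set.Icc (b : ℝ) (b + 1)) :
    ((b : ℝ) - a) * y ≤ (b - a) * z := by
  rcases eq_sub_one_or_eq_or_eq_add_one_of_mem_Icc_inter hz with rfl | rfl | rfl <;>
    simp only [Set.mem_Icc, Set.mem_inter_iff] at hy hz <;> push_cast at hz ⊢ <;> nlinarith

lemma sub_mul_eq_iff_mem_Icc (hy : y ∈ Set.Icc (a : ℝ) (a + 1))
    (hz : z ∈ Set.Icc (a : ℝ) (a + 1) ∩ Set.Icc (b : ℝ) (b + 1)) :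
    ((b : ℝ) - a) * y = (b - a) * z ↔ y ∈ Set.Icc (b : ℝ) (b + 1) := by
  rcases eq_sub_one_or_eq_or_eq_add_one_of_mem_Icc_inter hz with rfl | rfl | rfl <;>
    simp only [Set.mem_Icc, Set.mem_inter_iff] at hy hz ⊢ <;> push_cast at hz ⊢ <;>
    constructor <;> intro h <;> first | constructor <;> linarith | linarith

end UnitIntervals

lemma isFace_latTranslate_inter {d j₁ j₂ : ℕ} {u v : Fin (d + 1) → ℤ}
    (hsum : ∑ t, u t + (j₁ : ℤ) = ∑ t, v t + j₂) :
    IsFace (latTranslate d u j₁) (latTranslate d u j₁ ∩ latTranslate d v j₂) := by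
  rcases (latTranslate d u j₁ ∩ latTranslate d v j₂).eq_empty_or_nonempty with hempty | ⟨x₀, hx₀⟩
  · exact Or.inl hempty
  have hx₀_box : ∀ t, x₀ t ∈ Set.Icc (u t : ℝ) (u t + 1) ∩ Set.Icc (v t : ℝ) (v t + 1) :=
    fun t => ⟨(mem_latTranslate_iff.1 hx₀.1).2 t, (mem_latTranslate_iff.1 hx₀.2).2 t⟩
  set f := dotProductBilin ℝ ℝ (fun t => (v t : ℝ) - u t)
  have hf : ∀ y, f y = ∑ t, ((v t : ℝ) - u t) * y t := fun _ => rfl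
  have hf_le : ∀ y ∈ latTranslate d u j₁, f y ≤ f x₀ := fun y hy => by
    rw [hf, hf]
    exact Finset.sum_le_sum fun t _ =>
      sub_mul_le_of_mem_Icc ((mem_latTranslate_iff.1 hy).2 t) (hx₀_box t)
  have hf_eq : ∀ y ∈ latTranslate d u j₁, f y = f x₀ ↔ y ∈ latTranslate d v j₂ := by
    intro y hy
    obtain ⟨hy_sum, hy_box⟩ := mem_latTranslate_iff.1 hy
    have hsum' : ∑ t, (u t : ℝ) + j₁ = ∑ t, (v t : ℝ) + j₂ := by exact_mod_cast hsum
    rw [hf, hf, Finset.sum_eq_sum_iff_of_le fun t _ =>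
      sub_mul_le_of_mem_Icc (hy_box t) (hx₀_box t), mem_latTranslate_iff]
    simp only [Finset.mem_univ, true_implies, sub_mul_eq_iff_mem_Icc (hy_box _) (hx₀_box _)]
    exact ⟨fun h => ⟨by linarith, h⟩, And.right⟩
  refine Or.inr ⟨f, Set.ext fun y => ⟨fun hy => ⟨hy.1, ?_⟩, fun ⟨hy, hmax⟩ => ⟨hy, ?_⟩⟩⟩
  · rw [(hf_eq y hy.1).2 hy.2]
    exact hf_le
  · exact (hf_eq y hy).1 (le_antisymm (hf_le y hy) (hmax x₀ hx₀.1))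

theorem stmt9 (d : ℕ) (hd : 1 ≤ d) (i : ℤ) :
    ({x : Fin (d + 1) → ℝ | ∑ t, x t = i} =
      ⋃ j ∈ Finset.Icc 1 d, ⋃ v ∈ {v : Fin (d + 1) → ℤ | ∑ t, v t = i - j},
        latTranslate d v j) ∧
    (∀ (j1 j2 : ℕ) (u v : Fin (d + 1) → ℤ), 1 ≤ j1 → j1 ≤ d → 1 ≤ j2 → j2 ≤ d →
      (∑ t, u t) = i - j1 → (∑ t, v t) = i - j2 → (u, j1) ≠ (v, j2) →
      IsFace (latTranslate d u j1) (latTranslate d u j1 ∩ latTranslate d v j2) ∧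
      IsFace (latTranslate d v j2) (latTranslate d u j1 ∩ latTranslate d v j2)) := by
  refine ⟨Set.ext fun x => ?_, fun j₁ j₂ u v _ _ _ _ hu hv _ => ?_⟩
  · simp only [Set.mem_ofPred_eq, Set.mem_iUnion, exists_prop]
    refine ⟨exists_mem_latTranslate hd, ?_⟩
    rintro ⟨j, -, v, hv, hx⟩
    rw [(mem_latTranslate_iff.1 hx).1, ← Int.cast_sum, hv]
    push_cast
    ring
  · have hsum : ∑ t, u t + (j₁ : ℤ) = ∑ t, v t + j₂ := by rw [hu, hv]; ring
    exact ⟨isFace_latTranslate_inter hsum,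
      Set.inter_comm (latTranslate d u j₁) _ ▸ isFace_latTranslate_inter hsum.symm⟩
end
end

section
/- For d, r ≥ 1 and 1 ≤ i ≤ d, the r-dilate rΔ_{d,i} equals the union, over j ∈ {1,...,d} and over v ∈ Z_{≥0}^{d+1} with Σ v_t = ir - j and all v_t ≤ r - 1, of the translates v + Δ_{d,j}. -/
open scoped Classical BigOperators

noncomputable section

theorem stmt10 (d r i : ℕ) (hd : 1 ≤ d) (hr : 1 ≤ r) (hi1 : 1 ≤ i) (hid : i ≤ d) :
    rdil d r i =
      ⋃ j ∈ Finset.Icc 1 d, ⋃ v ∈ Comp (r - 1) (d + 1) ((i : ℤ) * r - j),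
        latTranslate d v j := by
  have hrR : (1 : ℝ) ≤ (r : ℝ) := by exact_mod_cast hr
  have hrcast : (((r - 1 : ℕ)) : ℤ) = (r : ℤ) - 1 := by
    omega
  ext x
  simp only [Set.mem_iUnion, rdil, Set.mem_setOf_eq, latTranslate, Δ, Comp,
    Finset.mem_Icc]
  constructor
  · rintro ⟨hsum, hbd⟩
    set v : Fin (d + 1) → ℤ := fun t => min ⌊x t⌋ ((r : ℤ) - 1) with hvdef
    have hv0 : ∀ t, 0 ≤ v t := fun t =>
      le_min (Int.floor_nonneg.2 (hbd t).1) (by omega)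
    have hvr : ∀ t, v t ≤ (r : ℤ) - 1 := fun t => min_le_right _ _
    have hle : ∀ t, (v t : ℝ) ≤ x t := by
      intro t
      have h1 : (v t : ℝ) ≤ (⌊x t⌋ : ℝ) := by exact_mod_cast min_le_left _ _
      exact h1.trans (Int.floor_le _)
    have hub : ∀ t, x t ≤ (v t : ℝ) + 1 := by
      intro t
      rcases le_or_gt (⌊x t⌋) ((r : ℤ) - 1) with h | h
      · have : v t = ⌊x t⌋ := min_eq_left h
        rw [this]
        exact (Int.lt_floor_add_one (x t)).le
      · have : v t = (r : ℤ) - 1 := min_eq_right h.le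
        rw [this]
        push_cast
        linarith [(hbd t).2]
    set j₀ : ℤ := (i : ℤ) * r - ∑ t, v t with hj₀def
    have hsum' : ∑ t, (x t - (v t : ℝ)) = (j₀ : ℝ) := by
      rw [Finset.sum_sub_distrib, hsum]
      push_cast [hj₀def]
      ring
    have hj₀0 : 0 ≤ j₀ := by
      have : (0 : ℝ) ≤ (j₀ : ℝ) := by
        rw [← hsum']
        exact Finset.sum_nonneg fun t _ => by linarith [hle t]
      exact_mod_cast this
    have hj₀d : j₀ ≤ (d : ℤ) := by
      by_contra hcon
      push_neg at hcon
      -- then j₀ ≥ d+1, but sum of d+1 terms each ≤ 1, so j₀ = d+1 and each term = 1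
      have hub' : (j₀ : ℝ) ≤ (d : ℝ) + 1 := by
        rw [← hsum']
        calc ∑ t, (x t - (v t : ℝ)) ≤ ∑ _t : Fin (d + 1), (1 : ℝ) :=
              Finset.sum_le_sum fun t _ => by linarith [hub t]
          _ = (d : ℝ) + 1 := by simp
      have hj₀eq : j₀ = (d : ℤ) + 1 := le_antisymm (by exact_mod_cast hub') hcon
      have hall : ∀ t, x t - (v t : ℝ) = 1 := by
        by_contra hc
        push_neg at hc
        obtain ⟨t₀, ht₀⟩ := hc
        have hlt : x t₀ - (v t₀ : ℝ) < 1 := lt_of_le_of_ne (by linarith [hub t₀]) ht₀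
        have : ∑ t, (x t - (v t : ℝ)) < ∑ _t : Fin (d + 1), (1 : ℝ) :=
          Finset.sum_lt_sum (fun t _ => by linarith [hub t]) ⟨t₀, Finset.mem_univ _, hlt⟩
        rw [hsum'] at this
        simp only [Finset.sum_const, Finset.card_univ, Fintype.card_fin, nsmul_eq_mul,
          mul_one] at this
        rw [hj₀eq] at this
        push_cast at this
        linarith
      have hxr : ∀ t, x t = (r : ℝ) := by
        intro t
        have hxt : x t = (v t : ℝ) + 1 := by linarith [hall t]
        have hfloor : ⌊x t⌋ = v t + 1 := by
          rw [hxt]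
          exact_mod_cast Int.floor_intCast (v t + 1)
        have : v t = (r : ℤ) - 1 := by
          rcases min_cases (⌊x t⌋) ((r : ℤ) - 1) with ⟨h1, _⟩ | ⟨h1, _⟩
          · exfalso
            have : v t = ⌊x t⌋ := h1
            omega
          · exact h1
        rw [hxt, this]
        push_cast
        ring
      have : ∑ t, x t = ((d : ℝ) + 1) * r := by
        rw [Finset.sum_congr rfl fun t _ => hxr t]
        simp [mul_comm]
      rw [hsum] at this
      have hir : (i : ℝ) < (d : ℝ) + 1 := by
        have : (i : ℝ) ≤ (d : ℝ) := by exact_mod_cast hid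
        linarith
      nlinarith
    by_cases hc1 : 1 ≤ j₀
    · refine ⟨j₀.toNat, ⟨⟨by omega, by omega⟩, v, ⟨⟨fun t => ⟨hv0 t, by rw [hrcast]; exact hvr t⟩,
        by push_cast [Int.toNat_of_nonneg hj₀0]; omega⟩, ?_, fun t => ⟨by linarith [hle t], by linarith [hub t]⟩⟩⟩⟩
      rw [hsum']
      have := Int.toNat_of_nonneg hj₀0
      exact_mod_cast this.symm
    · -- j₀ = 0
      have hj₀eq : j₀ = 0 := by omega
      have hall0 : ∀ t, x t = (v t : ℝ) := by
        intro t
        have h := (Finset.sum_eq_zero_iff_of_nonneg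
          (fun t _ => by linarith [hle t] : ∀ t ∈ Finset.univ, (0:ℝ) ≤ x t - (v t : ℝ))).1
          (by rw [hsum', hj₀eq]; simp) t (Finset.mem_univ t)
        linarith
      obtain ⟨t₀, ht₀⟩ : ∃ t, 0 < x t := by
        by_contra hc
        push_neg at hc
        have : ∑ t, x t = 0 := Finset.sum_eq_zero fun t _ => le_antisymm (hc t) (hbd t).1
        rw [hsum] at this
        nlinarith [show (1:ℝ) ≤ (i:ℝ) by exact_mod_cast hi1]
      have hvt₀ : 1 ≤ v t₀ := by
        have : (0 : ℝ) < (v t₀ : ℝ) := by rw [← hall0 t₀]; exact ht₀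
        exact_mod_cast this
      refine ⟨1, ⟨⟨le_refl 1, hd⟩, Function.update v t₀ (v t₀ - 1), ⟨⟨?_, ?_⟩, ?_, ?_⟩⟩⟩
      · intro t
        rcases eq_or_ne t t₀ with rfl | htne
        · simp only [Function.update_self]
          rw [hrcast]
          exact ⟨by omega, by linarith [hvr t]⟩
        · simp only [Function.update_of_ne htne]
          rw [hrcast]
          exact ⟨hv0 t, hvr t⟩
      · rw [Finset.sum_update_of_mem (Finset.mem_univ t₀)]
        have : ∑ t ∈ Finset.univ \ {t₀}, v t = (∑ t, v t) - v t₀ := by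
          rw [Finset.sum_sdiff_eq_sub (Finset.singleton_subset_iff.2 (Finset.mem_univ t₀))]
          simp
        rw [this]
        omega
      · have hzsum : ∑ t, Function.update v t₀ (v t₀ - 1) t = (i : ℤ) * r - 1 := by
          rw [Finset.sum_update_of_mem (Finset.mem_univ t₀)]
          have h3 : ∑ t ∈ Finset.univ \ {t₀}, v t = (∑ t, v t) - v t₀ := by
            rw [Finset.sum_sdiff_eq_sub (Finset.singleton_subset_iff.2 (Finset.mem_univ t₀))]
            simp
          rw [h3]
          omega
        rw [Finset.sum_sub_distrib, hsum]
        have h2 : ∑ t, ((Function.update v t₀ (v t₀ - 1) t : ℤ) : ℝ)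
            = ((∑ t, Function.update v t₀ (v t₀ - 1) t : ℤ) : ℝ) := by push_cast; ring
        rw [h2, hzsum]
        push_cast
        ring
      · intro t
        rcases eq_or_ne t t₀ with rfl | htne
        · simp only [Function.update_self]
          push_cast
          rw [hall0 t]
          constructor <;> linarith
        · simp only [Function.update_of_ne htne]
          rw [hall0 t]
          simp
  · rintro ⟨j, ⟨hj1, hjd⟩, v, ⟨⟨hvbd, hvsum⟩, hxsum, hxbd⟩⟩
    constructor
    · have h1 : ∑ t, (x t - (v t : ℝ)) = (j : ℝ) := hxsum
      rw [Finset.sum_sub_distrib] at h1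
      have h2 : ∑ t, ((v t : ℤ) : ℝ) = ((∑ t, v t : ℤ) : ℝ) := by push_cast; ring
      rw [h2, hvsum] at h1
      push_cast at h1 ⊢
      linarith
    · intro t
      have hb := hxbd t
      have hv0 : (0 : ℝ) ≤ (v t : ℝ) := by exact_mod_cast (hvbd t).1
      have hv1 : (v t : ℝ) ≤ (r : ℝ) - 1 := by
        have := (hvbd t).2
        rw [hrcast] at this
        exact_mod_cast this
      exact ⟨by linarith [hb.1], by linarith [hb.2]⟩
end
end

section
/- For 1 ≤ i ≤ d, the normalized volume of the hypersimplex Δ_{d,i} (i.e., d! times its d-dimensional Euclidean-induced lattice volume in the hyperplane Σ x_t = i) equals the Eulerian number A(d,i). -/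
open scoped Classical BigOperators

noncomputable section

/-!
Forgetting the last coordinate maps `Δ d i` onto the slab `{y ∈ [0,1]^d | i - 1 ≤ ∑ y ≤ i}`, and
the unimodular partial-sum map `y ↦ (y₀, y₀ + y₁, …)` carries the slab (up to a null set) onto
the region of points `u` with `u₀` and all increments in `[0,1)` and last coordinate in
`[i-1, i)`. Following Stanley, write `u = ⌊u⌋ + fract u`: the fractional part `w` runs over the
half-open unit cube, `⌊u⌋` jumps by one exactly at the descents of `w`, and `⌊u_last⌋ = i - 1` is
the number of descents. So the region is a disjoint union of lattice translates of the sets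
`{w ∈ [0,1)^d | w has descent set D}`, `#D = i - 1`. Up to a null set the cube is the disjoint
union of the `d!` order cells `{w | w is ordered like σ}`, all of volume `1 / d!`, and every point
of the cell of `σ` has the descent set of `σ`; hence the volume is `A(d,i) / d!`.
-/

open MeasureTheory Pointwise
open scoped ENNReal

namespace Hypersimplex

lemma volume_setOf_linearMap_eq {n : ℕ} {f : (Fin n → ℝ) →ₗ[ℝ] ℝ} (hf : f ≠ 0) (c : ℝ) :
    volume {w | f w = c} = 0 := by
  obtain ⟨x, hx⟩ : ∃ x, f x ≠ 0 := by
    by_contra! h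
    exact hf (LinearMap.ext h)
  have hker : LinearMap.ker f ≠ ⊤ := fun h => hx (LinearMap.ker_eq_top.mp h ▸ rfl)
  have hlevel : {w | f w = c} = (c / f x) • x +ᵥ (LinearMap.ker f : Set (Fin n → ℝ)) := by
    ext w
    rw [Set.mem_vadd_set_iff_neg_vadd_mem]
    simp only [vadd_eq_add, Set.mem_ofPred_eq, SetLike.mem_coe, LinearMap.mem_ker, map_add,
      map_neg, map_smul, smul_eq_mul, div_mul_cancel₀ _ hx]
    constructor <;> intro h <;> linarith
  rw [hlevel, measure_vadd]
  exact Measure.addHaar_submodule volume _ hker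

lemma volume_setOf_not_injective (n : ℕ) :
    volume {w : Fin n → ℝ | ¬ Function.Injective w} = 0 := by
  have hsub : {w : Fin n → ℝ | ¬ Function.Injective w} ⊆
      ⋃ (a : Fin n) (b : Fin n) (_ : a ≠ b), {w | w a = w b} := by
    intro w hw
    obtain ⟨a, b, hab, hne⟩ := Function.not_injective_iff.mp hw
    exact Set.mem_iUnion₂.mpr ⟨a, b, Set.mem_iUnion.mpr ⟨hne, hab⟩⟩
  refine measure_mono_null hsub (measure_iUnion_null fun a => measure_iUnion_null fun b =>
    measure_iUnion_null fun hab => ?_)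
  let f : (Fin n → ℝ) →ₗ[ℝ] ℝ := LinearMap.proj (R := ℝ) (φ := fun _ => ℝ) a - LinearMap.proj b
  have hf : f ≠ 0 := fun h => by
    simpa [f, Pi.single_apply, hab.symm] using LinearMap.congr_fun h (Pi.single a 1)
  simpa [f, sub_eq_zero] using volume_setOf_linearMap_eq hf 0

def unitCube (n : ℕ) : Set (Fin n → ℝ) := Set.univ.pi fun _ => Set.Ico 0 1

lemma measurableSet_unitCube (n : ℕ) : MeasurableSet (unitCube n) :=
  MeasurableSet.univ_pi fun _ => measurableSet_Ico

lemma volume_unitCube (n : ℕ) : volume (unitCube n) = 1 := by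
  simp [unitCube, volume_pi_pi]

def orderCell {n : ℕ} (σ : Equiv.Perm (Fin n)) : Set (Fin n → ℝ) :=
  unitCube n ∩ {w | StrictMono (w ∘ σ.symm)}

lemma strictMono_comp_iff_sort_eq {n : ℕ} {α : Type*} [LinearOrder α] {w : Fin n → α}
    {σ : Equiv.Perm (Fin n)} : StrictMono (w ∘ σ) ↔ Function.Injective w ∧ Tuple.sort w = σ := by
  constructor
  · intro h
    refine ⟨fun a b hab => σ.symm.injective (h.injective (by simpa using hab)),
      (Tuple.eq_sort_iff.mpr ⟨h.monotone, fun a b hab heq => absurd heq (h hab).ne⟩).symm⟩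
  · rintro ⟨hinj, rfl⟩
    exact (Tuple.monotone_sort w).strictMono_of_injective (hinj.comp (Tuple.sort w).injective)

lemma mem_orderCell_iff {n : ℕ} {σ : Equiv.Perm (Fin n)} {w : Fin n → ℝ} :
    w ∈ orderCell σ ↔ w ∈ unitCube n ∧ Function.Injective w ∧ Tuple.sort w = σ.symm := by
  rw [orderCell, Set.mem_inter_iff, Set.mem_ofPred_eq, strictMono_comp_iff_sort_eq]

lemma measurableSet_orderCell {n : ℕ} (σ : Equiv.Perm (Fin n)) : MeasurableSet (orderCell σ) := by
  refine (measurableSet_unitCube n).inter ?_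
  have : {w : Fin n → ℝ | StrictMono (w ∘ σ.symm)} =
      ⋂ (a : Fin n) (b : Fin n) (_ : a < b), {w | w (σ.symm a) < w (σ.symm b)} := by
    ext w; simp [StrictMono]
  rw [this]
  exact .iInter fun a => .iInter fun b => .iInter fun _ =>
    measurableSet_lt (measurable_pi_apply _) (measurable_pi_apply _)

lemma pairwise_disjoint_orderCell (n : ℕ) :
    Pairwise fun σ τ : Equiv.Perm (Fin n) => Disjoint (orderCell σ) (orderCell τ) := by
  refine fun σ τ hne => Set.disjoint_left.mpr fun w hσ hτ => hne ?_
  rw [mem_orderCell_iff] at hσ hτ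
  exact Equiv.symm_bijective.injective (hσ.2.2.symm.trans hτ.2.2)

lemma iUnion_orderCell (n : ℕ) :
    ⋃ σ : Equiv.Perm (Fin n), orderCell σ = unitCube n ∩ {w | Function.Injective w} := by
  ext w
  simp only [Set.mem_iUnion, mem_orderCell_iff, Set.mem_inter_iff, Set.mem_ofPred_eq]
  exact ⟨fun ⟨_, hcube, hinj, _⟩ => ⟨hcube, hinj⟩,
    fun ⟨hcube, hinj⟩ => ⟨(Tuple.sort w).symm, hcube, hinj, (Equiv.symm_symm _).symm⟩⟩

lemma volume_orderCell {n : ℕ} (σ : Equiv.Perm (Fin n)) :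
    volume (orderCell σ) = volume (orderCell (1 : Equiv.Perm (Fin n))) := by
  let e := MeasurableEquiv.piCongrLeft (fun _ : Fin n => ℝ) σ
  have he : ∀ w, e w = w ∘ σ.symm := fun w => funext fun t => by
    simpa using MeasurableEquiv.piCongrLeft_apply_apply (β := fun _ : Fin n => ℝ) σ w (σ.symm t)
  have hpre : orderCell σ = e ⁻¹' orderCell 1 := by
    ext w
    simp only [orderCell, unitCube, Set.mem_preimage, Set.mem_inter_iff, Set.mem_univ_pi,
      Set.mem_ofPred_eq, he]
    exact and_congr (σ.symm.forall_congr_right (q := fun t => w t ∈ Set.Ico (0 : ℝ) 1)).symm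
      Iff.rfl
  rw [hpre, (volume_measurePreserving_piCongrLeft _ σ).measure_preimage
    (measurableSet_orderCell 1).nullMeasurableSet]

lemma factorial_mul_volume_orderCell_one (n : ℕ) :
    (n.factorial : ℝ≥0∞) * volume (orderCell (1 : Equiv.Perm (Fin n))) = 1 := by
  calc (n.factorial : ℝ≥0∞) * volume (orderCell (1 : Equiv.Perm (Fin n)))
      = ∑ σ : Equiv.Perm (Fin n), volume (orderCell σ) := by
        simp [volume_orderCell, Fintype.card_perm]
    _ = volume (unitCube n ∩ {w | Function.Injective w}) := by
        rw [← iUnion_orderCell, measure_iUnion (pairwise_disjoint_orderCell n)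
          measurableSet_orderCell, tsum_fintype]
    _ = 1 := by
        rw [measure_inter_conull (by simpa [Set.compl_ofPred] using volume_setOf_not_injective n),
          volume_unitCube]

section Descents

variable {m : ℕ}

def descentSet {α : Type*} [LinearOrder α] (w : Fin (m + 1) → α) : Finset (Fin m) :=
  Finset.univ.filter fun j => w j.succ < w j.castSucc

lemma descentSet_comp_of_strictMono {α β : Type*} [LinearOrder α] [LinearOrder β] {g : α → β}
    (hg : StrictMono g) (w : Fin (m + 1) → α) : descentSet (g ∘ w) = descentSet w := by
  simp [descentSet, hg.lt_iff_lt]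

lemma descentSet_of_mem_orderCell {σ : Equiv.Perm (Fin (m + 1))} {w : Fin (m + 1) → ℝ}
    (hw : w ∈ orderCell σ) : descentSet w = descentSet σ := by
  have hw' : w = (w ∘ σ.symm) ∘ σ := by ext; simp
  rw [hw', descentSet_comp_of_strictMono hw.2]

lemma descents_eq_map_descentSet (π : Equiv.Perm (Fin (m + 1))) :
    descents (m + 1) π = (descentSet π).map Fin.castSuccEmb := by
  ext t
  induction t using Fin.lastCases with
  | last => simp [descents, descentSet]
  | cast j => simp [descents, descentSet, Fin.succ]

lemma A_succ_eq_sum_card (i : ℕ) :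
    A (m + 1) i = ∑ D ∈ Finset.univ.filter (fun D : Finset (Fin m) => D.card = i - 1),
      (Finset.univ.filter fun σ : Equiv.Perm (Fin (m + 1)) => descentSet σ = D).card := by
  rw [A, Finset.card_eq_sum_card_fiberwise (f := fun π : Equiv.Perm (Fin (m + 1)) => descentSet π)
    (t := Finset.univ.filter fun D : Finset (Fin m) => D.card = i - 1)
    fun π hπ => by simpa [descents_eq_map_descentSet] using hπ]
  refine Finset.sum_congr rfl fun D hD => congrArg Finset.card ?_
  rw [Finset.filter_filter]
  refine Finset.filter_congr fun π _ => ⟨And.right, fun hπ => ⟨?_, hπ⟩⟩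
  simpa [descents_eq_map_descentSet, hπ] using hD

def descentRegion (D : Finset (Fin m)) : Set (Fin (m + 1) → ℝ) :=
  unitCube (m + 1) ∩ {w | descentSet w = D}

lemma measurableSet_descentRegion (D : Finset (Fin m)) : MeasurableSet (descentRegion D) := by
  refine (measurableSet_unitCube _).inter ?_
  have : {w : Fin (m + 1) → ℝ | descentSet w = D} =
      ⋂ j, {w | w j.succ < w j.castSucc ↔ j ∈ D} := by
    ext w
    simp [descentSet, Finset.ext_iff]
  rw [this]
  refine .iInter fun j => ?_
  by_cases hj : j ∈ D <;> simp only [hj, iff_true, iff_false, not_lt]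
  · exact measurableSet_lt (measurable_pi_apply _) (measurable_pi_apply _)
  · exact measurableSet_le (measurable_pi_apply _) (measurable_pi_apply _)

lemma descentRegion_inter_injective (D : Finset (Fin m)) :
    descentRegion D ∩ {w | Function.Injective w} =
      ⋃ σ ∈ Finset.univ.filter (fun σ : Equiv.Perm (Fin (m + 1)) => descentSet σ = D),
        orderCell σ := by
  ext w
  simp only [Set.mem_iUnion, Finset.mem_filter, Finset.mem_univ, true_and, exists_prop]
  constructor
  · rintro ⟨⟨hcube, rfl⟩, hinj⟩
    have hw : w ∈ orderCell (Tuple.sort w).symm :=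
      mem_orderCell_iff.mpr ⟨hcube, hinj, (Equiv.symm_symm _).symm⟩
    exact ⟨_, (descentSet_of_mem_orderCell hw).symm, hw⟩
  · rintro ⟨σ, rfl, hw⟩
    exact ⟨⟨hw.1, descentSet_of_mem_orderCell hw⟩, (mem_orderCell_iff.mp hw).2.1⟩

lemma volume_descentRegion (D : Finset (Fin m)) :
    volume (descentRegion D) = ((Finset.univ.filter
      fun σ : Equiv.Perm (Fin (m + 1)) => descentSet σ = D).card : ℝ≥0∞) *
        volume (orderCell (1 : Equiv.Perm (Fin (m + 1)))) := by
  rw [← measure_inter_conull (t := {w | Function.Injective w})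
      (by simpa [Set.compl_ofPred] using volume_setOf_not_injective (m + 1)),
    descentRegion_inter_injective, measure_biUnion_finset
      ((pairwise_disjoint_orderCell _).set_pairwise _) fun σ _ => measurableSet_orderCell σ]
  simp [volume_orderCell]

end Descents

section Stanley

variable {m : ℕ}

def descentShift (D : Finset (Fin m)) (t : Fin (m + 1)) : ℕ :=
  (D.filter fun j => j.castSucc < t).card

lemma descentShift_zero (D : Finset (Fin m)) : descentShift D 0 = 0 := by
  simp [descentShift]

lemma descentShift_succ (D : Finset (Fin m)) (j : Fin m) :
    descentShift D j.succ = descentShift D j.castSucc + if j ∈ D then 1 else 0 := by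
  simp only [descentShift, Fin.castSucc_lt_succ_iff, Fin.castSucc_lt_castSucc_iff]
  have hsplit : D.filter (· ≤ j) = D.filter (· < j) ∪ D.filter (· = j) := by
    ext k
    simp [le_iff_lt_or_eq, and_or_left]
  rw [hsplit, Finset.card_union_of_disjoint (Finset.disjoint_filter.mpr fun _ _ h => h.ne),
    Finset.filter_eq']
  split_ifs <;> simp

lemma descentShift_last (D : Finset (Fin m)) : descentShift D (Fin.last m) = D.card := by
  simp [descentShift, Fin.castSucc_lt_last]

lemma fract_descentShift_add (D : Finset (Fin m)) {w : Fin (m + 1) → ℝ}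
    (hw : w ∈ unitCube (m + 1)) (t : Fin (m + 1)) :
    Int.fract ((descentShift D t : ℝ) + w t) = w t := by
  rw [Int.fract_natCast_add, Int.fract_eq_self]
  exact hw t (Set.mem_univ t)

lemma floor_eq_floor_add_ite {a b : ℝ} (h : b - a ∈ Set.Ico 0 1) :
    ⌊b⌋ = ⌊a⌋ + if Int.fract b < Int.fract a then 1 else 0 := by
  obtain ⟨h0, h1⟩ := h
  set k := ⌊b⌋ - ⌊a⌋ with hk_def
  have hk : (k : ℝ) = (b - a) - (Int.fract b - Int.fract a) := by
    rw [hk_def]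
    push_cast
    linarith [Int.floor_add_fract a, Int.floor_add_fract b]
  have hfa := Int.fract_nonneg a; have hfb := Int.fract_nonneg b
  have hfa' := Int.fract_lt_one a; have hfb' := Int.fract_lt_one b
  split_ifs with hfract
  · have : (0 : ℝ) < k ∧ (k : ℝ) < 2 := ⟨by linarith, by linarith⟩
    have : 0 < k ∧ k < 2 := by exact_mod_cast this
    omega
  · have : (-1 : ℝ) < k ∧ (k : ℝ) < 1 := ⟨by linarith, by linarith⟩
    have : -1 < k ∧ k < 1 := by exact_mod_cast this
    omega

def cumsumRegion (m i : ℕ) : Set (Fin (m + 1) → ℝ) :=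
  {u | u 0 ∈ Set.Ico 0 1 ∧ (∀ j : Fin m, u j.succ - u j.castSucc ∈ Set.Ico 0 1) ∧
    u (Fin.last m) ∈ Set.Ico ((i : ℝ) - 1) i}

lemma floor_eq_descentShift {u : Fin (m + 1) → ℝ} (hu0 : u 0 ∈ Set.Ico 0 1)
    (hu : ∀ j : Fin m, u j.succ - u j.castSucc ∈ Set.Ico 0 1) (t : Fin (m + 1)) :
    ⌊u t⌋ = descentShift (descentSet (Int.fract ∘ u)) t := by
  induction t using Fin.induction with
  | zero => simpa [descentShift_zero, Int.floor_eq_zero_iff] using hu0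
  | succ j ih =>
    rw [floor_eq_floor_add_ite (hu j), ih, descentShift_succ]
    simp [descentSet, apply_ite (Nat.cast : ℕ → ℤ)]

lemma descentShift_add_mem_cumsumRegion {i : ℕ} (hi : 1 ≤ i) {D : Finset (Fin m)}
    (hD : D.card = i - 1) {w : Fin (m + 1) → ℝ} (hw : w ∈ descentRegion D) :
    (fun t => (descentShift D t : ℝ)) + w ∈ cumsumRegion m i := by
  obtain ⟨hcube, rfl⟩ := hw
  have hmem : ∀ t, w t ∈ Set.Ico 0 1 := fun t => hcube t (Set.mem_univ t)
  refine ⟨by simpa [descentShift_zero] using hmem 0, fun j => ?_, ?_⟩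
  · have h1 := hmem j.succ; have h2 := hmem j.castSucc
    simp only [Pi.add_apply, descentShift_succ, Nat.cast_add, Set.mem_Ico] at h1 h2 ⊢
    by_cases hj : w j.succ < w j.castSucc <;>
      simp only [descentSet, Finset.mem_filter, Finset.mem_univ, true_and, hj, if_true,
        if_false] <;>
      constructor <;> push_cast <;> linarith
  · have := hmem (Fin.last m)
    simp only [Pi.add_apply, descentShift_last, hD, Nat.cast_sub hi, Set.mem_Ico] at this ⊢
    constructor <;> push_cast <;> linarith

lemma cumsumRegion_eq_iUnion {i : ℕ} (hi : 1 ≤ i) :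
    cumsumRegion m i = ⋃ D ∈ Finset.univ.filter (fun D : Finset (Fin m) => D.card = i - 1),
      (fun t => (descentShift D t : ℝ)) +ᵥ descentRegion D := by
  refine subset_antisymm (fun u hu => ?_) (Set.iUnion₂_subset fun D hD => ?_)
  · obtain ⟨hu0, hu, hlast⟩ := hu
    have hfloor := floor_eq_descentShift hu0 hu
    set D := descentSet (Int.fract ∘ u)
    have hD : D.card = i - 1 := by
      have h := hfloor (Fin.last m)
      have h' : ⌊u (Fin.last m)⌋ = (i : ℤ) - 1 :=
        Int.floor_eq_iff.mpr ⟨by push_cast; exact hlast.1, by push_cast; linarith [hlast.2]⟩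
      rw [descentShift_last] at h
      omega
    refine Set.mem_iUnion₂.mpr ⟨D, by simpa using hD, Int.fract ∘ u,
      ⟨fun t _ => ⟨Int.fract_nonneg _, Int.fract_lt_one _⟩, rfl⟩, funext fun t => ?_⟩
    have h := Int.floor_add_fract (u t)
    rw [hfloor t] at h
    simpa using h
  · rintro _ ⟨w, hw, rfl⟩
    exact descentShift_add_mem_cumsumRegion hi (by simpa using hD) hw

lemma pairwiseDisjoint_vadd_descentRegion :
    (Set.univ : Set (Finset (Fin m))).PairwiseDisjoint
      fun D => (fun t => (descentShift D t : ℝ)) +ᵥ descentRegion D := by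
  rintro D - D' - hne
  refine Set.disjoint_left.mpr ?_
  rintro _ ⟨w, ⟨hw, rfl⟩, rfl⟩ ⟨w', ⟨hw', hD'⟩, heq⟩
  refine hne ((congrArg descentSet (funext fun t => ?_)).trans hD')
  rw [← fract_descentShift_add (descentSet w) hw t, ← fract_descentShift_add D' hw' t]
  exact congrArg Int.fract (congrFun heq t).symm

lemma volume_cumsumRegion {i : ℕ} (hi : 1 ≤ i) :
    volume (cumsumRegion m i) =
      A (m + 1) i * volume (orderCell (1 : Equiv.Perm (Fin (m + 1)))) := by
  rw [cumsumRegion_eq_iUnion hi, measure_biUnion_finset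
    (pairwiseDisjoint_vadd_descentRegion.subset (Set.subset_univ _))
    fun D _ => (measurableSet_descentRegion D).const_vadd _]
  simp only [measure_vadd, volume_descentRegion, A_succ_eq_sum_card, Nat.cast_sum, Finset.sum_mul]

end Stanley

section Slab

def cumsumMatrix (m : ℕ) : Matrix (Fin (m + 1)) (Fin (m + 1)) ℝ :=
  Matrix.of fun t s => if s ≤ t then 1 else 0

lemma det_cumsumMatrix (m : ℕ) : (cumsumMatrix m).det = 1 := by
  rw [Matrix.det_of_isLowerTriangular _ fun t s hts => by
    simp [cumsumMatrix, OrderDual.toDual_lt_toDual.mp hts]]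
  simp [cumsumMatrix]

lemma cumsumMatrix_mulVec (m : ℕ) (y : Fin (m + 1) → ℝ) (t : Fin (m + 1)) :
    (cumsumMatrix m).mulVec y t = ∑ s, if s ≤ t then y s else 0 := by
  simp [cumsumMatrix, Matrix.mulVec, dotProduct]

lemma cumsumMatrix_mulVec_succ_sub (m : ℕ) (y : Fin (m + 1) → ℝ) (j : Fin m) :
    (cumsumMatrix m).mulVec y j.succ - (cumsumMatrix m).mulVec y j.castSucc = y j.succ := by
  rw [cumsumMatrix_mulVec, cumsumMatrix_mulVec, ← Finset.sum_sub_distrib,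
    Finset.sum_eq_single j.succ]
  · simp
  · intro s _ hs
    have hle : s ≤ j.succ ↔ s ≤ j.castSucc := by
      rw [Fin.le_castSucc_iff]
      exact ⟨fun h => lt_of_le_of_ne h hs, le_of_lt⟩
    simp [hle]
  · simp

lemma cumsumMatrix_mulVec_zero (m : ℕ) (y : Fin (m + 1) → ℝ) :
    (cumsumMatrix m).mulVec y 0 = y 0 := by
  simp [cumsumMatrix_mulVec]

lemma cumsumMatrix_mulVec_last (m : ℕ) (y : Fin (m + 1) → ℝ) :
    (cumsumMatrix m).mulVec y (Fin.last m) = ∑ t, y t := by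
  simp [cumsumMatrix_mulVec, Fin.le_last]

def slab (n i : ℕ) : Set (Fin n → ℝ) :=
  {y | (∀ t, y t ∈ Set.Icc 0 1) ∧ ∑ t, y t ∈ Set.Icc ((i : ℝ) - 1) i}

def halfOpenSlab (n i : ℕ) : Set (Fin n → ℝ) :=
  unitCube n ∩ {y | ∑ t, y t ∈ Set.Ico ((i : ℝ) - 1) i}

lemma image_Δ_eq_slab (d i : ℕ) :
    (fun x (t : Fin d) => x t.castSucc) '' Δ d i = slab d i := by
  ext y
  constructor
  · rintro ⟨x, ⟨hsum, hx⟩, rfl⟩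
    have hlast := hx (Fin.last d)
    rw [Fin.sum_univ_castSucc] at hsum
    exact ⟨fun t => hx t.castSucc, by constructor <;> linarith⟩
  · rintro ⟨hy, hsum⟩
    refine ⟨Fin.snoc y ((i : ℝ) - ∑ t, y t), ⟨?_, fun t => ?_⟩, by simp⟩
    · simp [Fin.sum_univ_castSucc]
    · induction t using Fin.lastCases with
      | last => simp only [Fin.snoc_last]; constructor <;> linarith [hsum.1, hsum.2]
      | cast t => simpa using hy t

lemma volume_slab (n i : ℕ) [NeZero n] : volume (slab n i) = volume (halfOpenSlab n i) := by
  have hsub : halfOpenSlab n i ⊆ slab n i := fun y ⟨hy, hsum⟩ =>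
    ⟨fun t => Set.Ico_subset_Icc_self (hy t (Set.mem_univ t)), Set.Ico_subset_Icc_self hsum⟩
  have hdiff : slab n i \ halfOpenSlab n i ⊆
      (⋃ t, {y : Fin n → ℝ | LinearMap.proj (R := ℝ) (φ := fun _ => ℝ) t y = 1}) ∪
        {y | (∑ t, LinearMap.proj (R := ℝ) (φ := fun _ => ℝ) t) y = i} := by
    rintro y ⟨⟨hy, hsum⟩, hnot⟩
    by_contra h
    simp only [Set.mem_union, Set.mem_iUnion, Set.mem_ofPred_eq, LinearMap.coe_sum,
      LinearMap.coe_proj, Finset.sum_apply, Function.eval, not_or, not_exists] at h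
    exact hnot ⟨fun t _ => ⟨(hy t).1, lt_of_le_of_ne (hy t).2 (h.1 t)⟩,
      hsum.1, lt_of_le_of_ne hsum.2 h.2⟩
  have hproj : ∀ t, LinearMap.proj (R := ℝ) (φ := fun _ : Fin n => ℝ) t ≠ 0 := fun t h => by
    simpa using LinearMap.congr_fun h (Pi.single t 1)
  have hsum : ∑ t, LinearMap.proj (R := ℝ) (φ := fun _ : Fin n => ℝ) t ≠ 0 := fun h => by
    simpa using LinearMap.congr_fun h (Pi.single 0 1)
  rw [← measure_inter_conull' (measure_mono_null hdiff (measure_union_null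
    (measure_iUnion_null fun t => volume_setOf_linearMap_eq (hproj t) 1)
    (volume_setOf_linearMap_eq hsum i))), Set.inter_eq_right.mpr hsub]

lemma volume_halfOpenSlab (m i : ℕ) :
    volume (halfOpenSlab (m + 1) i) = volume (cumsumRegion m i) := by
  have hpre : halfOpenSlab (m + 1) i = Matrix.toLin' (cumsumMatrix m) ⁻¹' cumsumRegion m i := by
    ext y
    simp only [halfOpenSlab, cumsumRegion, unitCube, Set.mem_inter_iff, Set.mem_univ_pi,
      Set.mem_preimage, Set.mem_ofPred_eq, Matrix.toLin'_apply, cumsumMatrix_mulVec_zero,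
      cumsumMatrix_mulVec_succ_sub, cumsumMatrix_mulVec_last, Fin.forall_fin_succ, and_assoc]
  rw [hpre, Measure.addHaar_preimage_linearMap _ (by simp [det_cumsumMatrix])]
  simp [det_cumsumMatrix]

end Slab

end Hypersimplex

open Hypersimplex

open MeasureTheory in
theorem stmt16_general (d i : ℕ) (hd : 1 ≤ d) (hi1 : 1 ≤ i) :
    (d.factorial : ENNReal) *
        volume ((fun x (t : Fin d) => x t.castSucc) '' Δ d i) = A d i := by
  obtain ⟨m, rfl⟩ : ∃ m, d = m + 1 := ⟨d - 1, by omega⟩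
  rw [image_Δ_eq_slab, volume_slab, volume_halfOpenSlab, volume_cumsumRegion hi1, mul_left_comm,
    factorial_mul_volume_orderCell_one, mul_one]

open MeasureTheory in
/-- Laplace's theorem: the normalized volume of `Δ_{d,i}` is the Eulerian number `A(d,i)`.
The hypersimplex is identified with a full-dimensional body in `ℝ^d` via the
unimodular projection forgetting the last coordinate. -/
theorem stmt16 (d i : ℕ) (hd : 1 ≤ d) (hi1 : 1 ≤ i) (hid : i ≤ d) :
    (d.factorial : ENNReal) *
        volume ((fun x (t : Fin d) => x t.castSucc) '' Δ d i) = A d i :=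
  stmt16_general d i hd hi1
end
end
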